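/- arXiv:1901.09258 — 13 statements merged into one kernel-verified Lean document; each statement's English description precedes it below -/
import Mathlib

section
/- In the antiferromagnetic case θ > 1, every positive solution (x, y) of the fixed-point system (★) satisfies x = y. -/
/-! If `x < y`, the weight `1 + x + θ y` in the equation for `x` exceeds the weight
`1 + θ x + y` in the equation for `y` (as `θ > 1`), so the right-hand side for `x` is at
least that for `y`, forcing `x ≥ y`. -/

theorem eq_of_eq_apply_of_eq_apply_swap {α : Type*} [LinearOrder α] {s : Set α} (f : α → α → α)
    (hf : ∀ a ∈ s, ∀ b ∈ s, a ≤ b → f b a ≤ f a b) {x y : α} (hx : x ∈ s) (hy : y ∈ s)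
    (h1 : x = f x y) (h2 : y = f y x) : x = y := by
  rcases lt_trichotomy x y with hxy | hxy | hxy
  · have := hf x hx y hy hxy.le
    rw [← h1, ← h2] at this
    exact absurd this hxy.not_ge
  · exact hxy
  · have := hf y hy x hx hxy.le
    rw [← h1, ← h2] at this
    exact absurd this hxy.not_ge

/-- (★) reads `x = widomRowlinsonMap k lam θ x y`, `y = widomRowlinsonMap k lam θ y x`. -/
noncomputable def widomRowlinsonMap (k : ℕ) (lam θ a b : ℝ) : ℝ :=
  lam * ((1 + a + θ * b) / (1 + a + b)) ^ k

theorem widomRowlinsonMap_swap_le {k : ℕ} {lam θ a b : ℝ} (hlam : 0 ≤ lam) (hθ : 1 ≤ θ)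
    (ha : 0 ≤ a) (hb : 0 ≤ b) (hab : a ≤ b) :
    widomRowlinsonMap k lam θ b a ≤ widomRowlinsonMap k lam θ a b := by
  unfold widomRowlinsonMap
  rw [add_right_comm 1 b a]
  gcongr lam * (?_ / _) ^ k
  nlinarith [mul_nonneg (sub_nonneg.2 hθ) (sub_nonneg.2 hab)]

theorem stmt_2_general (k : ℕ) (lam θ : ℝ) (hlam : 0 < lam) (hθ : 1 < θ)
    (x y : ℝ) (hx : 0 < x) (hy : 0 < y)
    (h1 : x = lam * ((1 + x + θ * y) / (1 + x + y)) ^ k)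
    (h2 : y = lam * ((1 + θ * x + y) / (1 + x + y)) ^ k) :
    x = y := by
  refine eq_of_eq_apply_of_eq_apply_swap (s := Set.Ici 0) (widomRowlinsonMap k lam θ)
    (fun a ha b hb hab => widomRowlinsonMap_swap_le hlam.le hθ.le ha hb hab)
    hx.le hy.le h1 ?_
  rw [widomRowlinsonMap, add_right_comm 1 y x, add_right_comm 1 y (θ * x)]
  exact h2

/-- In the antiferromagnetic case `θ > 1`, every positive solution `(x, y)` of (★)
satisfies `x = y`. -/
theorem stmt_2 (k : ℕ) (hk : 2 ≤ k) (lam θ : ℝ) (hlam : 0 < lam) (hθ : 1 < θ)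
    (x y : ℝ) (hx : 0 < x) (hy : 0 < y)
    (h1 : x = lam * ((1 + x + θ * y) / (1 + x + y)) ^ k)
    (h2 : y = lam * ((1 + θ * x + y) / (1 + x + y)) ^ k) :
    x = y :=
  stmt_2_general k lam θ hlam hθ x y hx hy h1 h2
end

section
/- Let k ≥ 2 and θ > 1 (antiferromagnetic case), and set θ_cr = 2·((k+1)/(k−1))² − 1. (1) If θ ≤ θ_cr, then for every λ > 0 the system (★) has exactly one positive solution. (2) If θ > θ_cr, then the quadratic 2x² + (4 − (θ−1)(k−1))x + (θ+1) = 0 has two distinct positive real roots x₁ < x₂; setting λ_{cr,i} = (2^k·x_i/(1+θ)^{k+1})·((1+θ+2x_i)/(2(1+x_i)))^k for i = 1, 2, one has λ_{cr,2} < λ_{cr,1}, and the system (★) has: exactly one positive solution if 0 < λ < λ_{cr,2} or λ > λ_{cr,1}; exactly two positive solutions if λ = λ_{cr,2} or λ = λ_{cr,1}; exactly three positive solutions if λ_{cr,2} < λ < λ_{cr,1}. -/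
/-!
For `θ > 1` every positive solution of (★) is symmetric: if `x < y`, the base of the power in
the equation for `y` is smaller than the one in the equation for `x`, which forces `y < x`.
Writing the common value as `x / (1 + θ)`, the diagonal system becomes `critLam θ k x = λ`, so we
count the positive solutions of this one equation. `critLam θ k` vanishes at `0`, tends to `∞`,
and its derivative is a positive multiple of the quadratic `critQuad θ k`, whose discriminant is
`(θ - 1)(k - 1)²(θ - θ_cr)`. For `θ ≤ θ_cr` the function is therefore strictly increasing; for
`θ > θ_cr` it increases, decreases and increases again, turning at the positive roots
`x₁ < x₂`, and the intermediate value theorem on each monotone piece gives the count.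
-/

open Set Filter

theorem Set.encard_inter_singleton {α : Type*} (s : Set α) (y : α) [Decidable (y ∈ s)] :
    (s ∩ {y}).encard = if y ∈ s then 1 else 0 := by
  split_ifs with h
  · rw [inter_eq_right.2 (singleton_subset_iff.2 h), encard_singleton]
  · rw [inter_singleton_eq_empty.2 h, encard_empty]

theorem Set.InjOn.encard_inter_preimage_singleton {α β : Type*} {g : α → β} {s : Set α}
    (hg : InjOn g s) (y : β) : (s ∩ g ⁻¹' {y}).encard = (g '' s ∩ {y}).encard := by
  rw [← (hg.mono inter_subset_left).encard_image, image_inter_preimage]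

section MonotonePieces

variable {f : ℝ → ℝ} {a b : ℝ}

theorem image_Ioc_of_strictMonoOn (hab : a ≤ b) (hmono : StrictMonoOn f (Icc a b))
    (hcont : ContinuousOn f (Icc a b)) : f '' Ioc a b = Ioc (f a) (f b) := by
  refine Subset.antisymm ?_ (intermediate_value_Ioc hab hcont)
  rintro _ ⟨x, hx, rfl⟩
  exact ⟨hmono ⟨le_rfl, hab⟩ (Ioc_subset_Icc_self hx) hx.1,
    hmono.monotoneOn (Ioc_subset_Icc_self hx) ⟨hab, le_rfl⟩ hx.2⟩

theorem image_Ioo_of_strictAntiOn (hab : a ≤ b) (hanti : StrictAntiOn f (Icc a b))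
    (hcont : ContinuousOn f (Icc a b)) : f '' Ioo a b = Ioo (f b) (f a) := by
  refine Subset.antisymm ?_ (intermediate_value_Ioo' hab hcont)
  rintro _ ⟨x, hx, rfl⟩
  exact ⟨hanti (Ioo_subset_Icc_self hx) ⟨hab, le_rfl⟩ hx.2,
    hanti ⟨le_rfl, hab⟩ (Ioo_subset_Icc_self hx) hx.1⟩

theorem image_Ici_of_strictMonoOn (hmono : StrictMonoOn f (Ici a))
    (hcont : ContinuousOn f (Ici a)) (htop : Tendsto f atTop atTop) : f '' Ici a = Ici (f a) := by
  refine Subset.antisymm ?_ (intermediate_value_Ici hcont htop)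
  rintro _ ⟨x, hx, rfl⟩
  exact hmono.monotoneOn self_mem_Ici hx hx

theorem image_Ioi_of_strictMonoOn (hmono : StrictMonoOn f (Ici a))
    (hcont : ContinuousOn f (Ici a)) (htop : Tendsto f atTop atTop) : f '' Ioi a = Ioi (f a) := by
  refine Subset.antisymm ?_ (intermediate_value_Ioi hcont htop)
  rintro _ ⟨x, hx, rfl⟩
  exact hmono self_mem_Ici (Ioi_subset_Ici_self hx) hx

theorem encard_pos_fiber_of_strictMonoOn (hmono : StrictMonoOn f (Ici 0))
    (hcont : ContinuousOn f (Ici 0)) (htop : Tendsto f atTop atTop) (hf0 : f 0 = 0) {c : ℝ}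
    (hc : 0 < c) :
    {x | 0 < x ∧ f x = c}.encard = 1 := by
  change (Ioi 0 ∩ f ⁻¹' {c}).encard = 1
  rw [(hmono.mono Ioi_subset_Ici_self).injOn.encard_inter_preimage_singleton,
    image_Ioi_of_strictMonoOn hmono hcont htop, hf0, encard_inter_singleton,
    if_pos (mem_Ioi.2 hc)]

theorem encard_pos_fiber_eq_sum {x₁ x₂ : ℝ} (h₁ : 0 < x₁) (h₁₂ : x₁ < x₂)
    (hmono₁ : StrictMonoOn f (Icc 0 x₁)) (hanti : StrictAntiOn f (Icc x₁ x₂))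
    (hmono₂ : StrictMonoOn f (Ici x₂)) (hcont : ContinuousOn f (Ici 0))
    (htop : Tendsto f atTop atTop) (hf0 : f 0 = 0) (c : ℝ) :
    {x | 0 < x ∧ f x = c}.encard = (if c ∈ Ioc 0 (f x₁) then 1 else 0) +
      (if c ∈ Ioo (f x₂) (f x₁) then 1 else 0) + (if c ∈ Ici (f x₂) then 1 else 0) := by
  have hsplit : Ioi (0 : ℝ) = Ioc 0 x₁ ∪ Ioo x₁ x₂ ∪ Ici x₂ := by
    rw [Ioc_union_Ioo_eq_Ioo h₁.le h₁₂, Ioo_union_Ici_eq_Ioi (h₁.trans h₁₂)]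
  have hcont' : ∀ {s}, s ⊆ Ici 0 → ContinuousOn f s := fun hs => hcont.mono hs
  have hx₁ : Ici x₁ ⊆ Ici 0 := Ici_subset_Ici.2 h₁.le
  change (Ioi 0 ∩ f ⁻¹' {c}).encard = _
  rw [hsplit, union_inter_distrib_right, union_inter_distrib_right, encard_union_eq,
    encard_union_eq,
    (hmono₁.mono Ioc_subset_Icc_self).injOn.encard_inter_preimage_singleton,
    (hanti.mono Ioo_subset_Icc_self).injOn.encard_inter_preimage_singleton,
    hmono₂.injOn.encard_inter_preimage_singleton,
    image_Ioc_of_strictMonoOn h₁.le hmono₁ (hcont' Icc_subset_Ici_self), hf0,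
    image_Ioo_of_strictAntiOn h₁₂.le hanti (hcont' (Icc_subset_Ici_self.trans hx₁)),
    image_Ici_of_strictMonoOn hmono₂ (hcont' ((Ici_subset_Ici.2 h₁₂.le).trans hx₁)) htop,
    encard_inter_singleton, encard_inter_singleton, encard_inter_singleton]
  · exact (Ioc_disjoint_Ioi_same.mono_right Ioo_subset_Ioi_self).mono inter_subset_left
      inter_subset_left
  · rw [← union_inter_distrib_right, Ioc_union_Ioo_eq_Ioo h₁.le h₁₂]
    exact (Iio_disjoint_Ici le_rfl).mono (inter_subset_left.trans Ioo_subset_Iio_self)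
      inter_subset_left

theorem encard_pos_fiber_of_up_down_up {x₁ x₂ : ℝ} (h₁ : 0 < x₁) (h₁₂ : x₁ < x₂)
    (hmono₁ : StrictMonoOn f (Icc 0 x₁)) (hanti : StrictAntiOn f (Icc x₁ x₂))
    (hmono₂ : StrictMonoOn f (Ici x₂)) (hcont : ContinuousOn f (Ici 0))
    (htop : Tendsto f atTop atTop) (hf0 : f 0 = 0) {c : ℝ} (hc : 0 < c) :
    ((c < f x₂ ∨ f x₁ < c) → {x | 0 < x ∧ f x = c}.encard = 1) ∧
    ((c = f x₂ ∨ c = f x₁) → {x | 0 < x ∧ f x = c}.encard = 2) ∧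
    (f x₂ < c ∧ c < f x₁ → {x | 0 < x ∧ f x = c}.encard = 3) := by
  have h₂₁ : f x₂ < f x₁ := hanti ⟨le_rfl, h₁₂.le⟩ ⟨h₁₂.le, le_rfl⟩ h₁₂
  rw [encard_pos_fiber_eq_sum h₁ h₁₂ hmono₁ hanti hmono₂ hcont htop hf0]
  simp only [mem_Ioc, mem_Ioo, mem_Ici]
  refine ⟨fun h => ?_, fun h => ?_, fun h => ?_⟩ <;> split_ifs <;> grind

end MonotonePieces

theorem exists_roots_of_discrim_pos {a b c : ℝ} (ha : 0 < a) (hb : b < 0) (hc : 0 < c)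
    (hd : 0 < discrim a b c) :
    ∃ x₁ x₂ : ℝ, 0 < x₁ ∧ x₁ < x₂ ∧ ∀ x, a * (x * x) + b * x + c = a * (x - x₁) * (x - x₂) := by
  set s := √(discrim a b c)
  have hs : s * s = discrim a b c := Real.mul_self_sqrt hd.le
  have hs₀ : 0 < s := Real.sqrt_pos.2 hd
  have hsb : s < -b := by rw [discrim] at hs; nlinarith
  refine ⟨(-b - s) / (2 * a), (-b + s) / (2 * a), by apply div_pos <;> linarith,
    by gcongr; linarith, fun x => ?_⟩
  rw [discrim] at hs
  field_simp
  linear_combination hs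

noncomputable section

def critLam (θ : ℝ) (k : ℕ) (x : ℝ) : ℝ :=
  2 ^ k * x / (1 + θ) ^ (k + 1) * ((1 + θ + 2 * x) / (2 * (1 + x))) ^ k

def critQuad (θ : ℝ) (k : ℕ) (x : ℝ) : ℝ :=
  2 * x ^ 2 + (4 - (θ - 1) * ((k : ℝ) - 1)) * x + (θ + 1)

def critTheta (k : ℕ) : ℝ := 2 * (((k : ℝ) + 1) / ((k : ℝ) - 1)) ^ 2 - 1

end

section CritLam

variable {θ : ℝ} {k : ℕ}

theorem hasDerivAt_critLam (hθ : 0 < 1 + θ) (hk : k ≠ 0) {x : ℝ} (hx : 0 ≤ x) :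
    ∃ c > 0, HasDerivAt (critLam θ k) (c * critQuad θ k x) x := by
  obtain ⟨m, rfl⟩ := Nat.exists_eq_succ_of_ne_zero hk
  have h1x : 0 < 1 + x := by linarith
  have hg : HasDerivAt (fun x => (1 + θ + 2 * x) / (2 * (1 + x)))
      ((1 - θ) / (2 * (1 + x) ^ 2)) x := by
    refine ((((hasDerivAt_id' x).const_mul 2).const_add (1 + θ)).fun_div
      (((hasDerivAt_id' x).const_add 1).const_mul 2) (by positivity)).congr_deriv ?_
    field_simp
    ring
  have hF := (((hasDerivAt_id' x).const_mul (2 ^ (m + 1))).div_const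
    ((1 + θ) ^ (m + 1 + 1))).fun_mul (hg.fun_pow (m + 1))
  refine ⟨2 ^ (m + 1) / (1 + θ) ^ (m + 2) * ((1 + θ + 2 * x) / (2 * (1 + x))) ^ m /
    (2 * (1 + x) ^ 2), by positivity, hF.congr_deriv ?_⟩
  simp only [critQuad, Nat.add_sub_cancel]
  rw [pow_succ ((1 + θ + 2 * x) / (2 * (1 + x))) m]
  generalize ((1 + θ + 2 * x) / (2 * (1 + x))) ^ m = p
  push_cast
  field_simp
  ring

theorem continuousOn_critLam (hθ : 0 < 1 + θ) : ContinuousOn (critLam θ k) (Ici 0) := by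
  intro x (hx : 0 ≤ x)
  have : 0 < 1 + x := by linarith
  unfold critLam
  fun_prop (disch := positivity)

theorem critLam_zero : critLam θ k 0 = 0 := by simp [critLam]

theorem div_pow_le_critLam (hθ : 0 ≤ θ) {x : ℝ} (hx : 0 ≤ x) :
    x / (1 + θ) ^ (k + 1) ≤ critLam θ k x := by
  have h1 : 1 ≤ 2 * ((1 + θ + 2 * x) / (2 * (1 + x))) := by
    rw [mul_div_assoc', mul_div_mul_left _ _ two_ne_zero, one_le_div (by linarith)]
    linarith
  calc x / (1 + θ) ^ (k + 1) = x / (1 + θ) ^ (k + 1) * 1 := (mul_one _).symm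
    _ ≤ x / (1 + θ) ^ (k + 1) * (2 * ((1 + θ + 2 * x) / (2 * (1 + x)))) ^ k := by
      gcongr
      exact one_le_pow₀ h1
    _ = critLam θ k x := by rw [critLam, mul_pow]; ring

theorem tendsto_critLam_atTop (hθ : 0 ≤ θ) : Tendsto (critLam θ k) atTop atTop := by
  refine tendsto_atTop_mono' atTop ?_
    (tendsto_id.atTop_div_const (pow_pos (by linarith : (0 : ℝ) < 1 + θ) (k + 1)))
  filter_upwards [eventually_ge_atTop 0] with x hx
  exact div_pow_le_critLam hθ hx

theorem strictMonoOn_critLam (hθ : 0 < 1 + θ) (hk : k ≠ 0) {D : Set ℝ} (hD : Convex ℝ D)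
    (hD₀ : D ⊆ Ici 0) (hq : ∀ x ∈ interior D, 0 < critQuad θ k x) :
    StrictMonoOn (critLam θ k) D := by
  refine strictMonoOn_of_deriv_pos hD ((continuousOn_critLam hθ).mono hD₀) fun x hx => ?_
  obtain ⟨c, hc, hd⟩ := hasDerivAt_critLam hθ hk (hD₀ (interior_subset hx))
  rw [hd.deriv]
  exact mul_pos hc (hq x hx)

theorem strictAntiOn_critLam (hθ : 0 < 1 + θ) (hk : k ≠ 0) {D : Set ℝ} (hD : Convex ℝ D)
    (hD₀ : D ⊆ Ici 0) (hq : ∀ x ∈ interior D, critQuad θ k x < 0) :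
    StrictAntiOn (critLam θ k) D := by
  refine strictAntiOn_of_deriv_neg hD ((continuousOn_critLam hθ).mono hD₀) fun x hx => ?_
  obtain ⟨c, hc, hd⟩ := hasDerivAt_critLam hθ hk (hD₀ (interior_subset hx))
  rw [hd.deriv]
  exact mul_neg_of_pos_of_neg hc (hq x hx)

theorem critQuad_eq (x : ℝ) :
    critQuad θ k x = 2 * (x * x) + (4 - (θ - 1) * ((k : ℝ) - 1)) * x + (θ + 1) := by
  rw [critQuad]; ring

theorem discrim_critQuad (hk : (k : ℝ) ≠ 1) :
    discrim 2 (4 - (θ - 1) * ((k : ℝ) - 1)) (θ + 1) =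
      (θ - 1) * ((k : ℝ) - 1) ^ 2 * (θ - critTheta k) := by
  have : (k : ℝ) - 1 ≠ 0 := sub_ne_zero.2 hk
  rw [discrim, critTheta]
  field_simp
  ring

theorem critQuad_pos_of_discrim_nonpos
    (hd : discrim 2 (4 - (θ - 1) * ((k : ℝ) - 1)) (θ + 1) ≤ 0) {x : ℝ}
    (hx : x ≠ -(4 - (θ - 1) * ((k : ℝ) - 1)) / 4) : 0 < critQuad θ k x := by
  set b := 4 - (θ - 1) * ((k : ℝ) - 1)
  have hsq : 0 < (4 * x + b) ^ 2 := pow_two_pos_of_ne_zero fun h => hx (by linarith)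
  have : 8 * critQuad θ k x = (4 * x + b) ^ 2 - discrim 2 b (θ + 1) := by
    rw [critQuad_eq, discrim]; ring
  linarith

theorem strictMonoOn_critLam_of_discrim_nonpos (hθ : 0 < 1 + θ) (hk : k ≠ 0)
    (hd : discrim 2 (4 - (θ - 1) * ((k : ℝ) - 1)) (θ + 1) ≤ 0) :
    StrictMonoOn (critLam θ k) (Ici 0) := by
  set v := -(4 - (θ - 1) * ((k : ℝ) - 1)) / 4
  have hv : (0 : ℝ) ≤ max 0 v := le_max_left _ _
  rw [← Icc_union_Ici_eq_Ici hv]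
  refine (strictMonoOn_critLam hθ hk (convex_Icc _ _) Icc_subset_Ici_self fun x hx => ?_).union
    (strictMonoOn_critLam hθ hk (convex_Ici _) (Ici_subset_Ici.2 hv) fun x hx => ?_)
    (isGreatest_Icc hv) isLeast_Ici
  · rw [interior_Icc] at hx
    exact critQuad_pos_of_discrim_nonpos hd
      ((lt_max_iff.1 hx.2).resolve_left hx.1.not_gt).ne
  · rw [interior_Ici] at hx
    exact critQuad_pos_of_discrim_nonpos hd ((le_max_right _ _).trans_lt hx).ne'

theorem exists_roots_critQuad (hθ : 1 < θ) (hk : 2 ≤ k) (hcr : critTheta k < θ) :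
    ∃ x₁ x₂ : ℝ, 0 < x₁ ∧ x₁ < x₂ ∧ ∀ x, critQuad θ k x = 2 * (x - x₁) * (x - x₂) := by
  have hK : (2 : ℝ) ≤ k := by exact_mod_cast hk
  have hd : 0 < discrim 2 (4 - (θ - 1) * ((k : ℝ) - 1)) (θ + 1) := by
    rw [discrim_critQuad (by linarith)]
    exact mul_pos (mul_pos (by linarith) (by nlinarith)) (by linarith)
  have hb : 4 - (θ - 1) * ((k : ℝ) - 1) < 0 := by
    rw [discrim] at hd
    by_contra! hb
    nlinarith [mul_pos (by linarith : (0 : ℝ) < θ - 1) (by linarith : (0 : ℝ) < k - 1)]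
  obtain ⟨x₁, x₂, h₁, h₁₂, hfac⟩ := exists_roots_of_discrim_pos two_pos hb (by linarith) hd
  exact ⟨x₁, x₂, h₁, h₁₂, fun x => by rw [critQuad_eq, hfac]⟩

theorem critLam_up_down_up (hθ : 0 < 1 + θ) (hk : k ≠ 0) {x₁ x₂ : ℝ}
    (h₁ : 0 < x₁) (h₁₂ : x₁ < x₂) (hfac : ∀ x, critQuad θ k x = 2 * (x - x₁) * (x - x₂)) :
    StrictMonoOn (critLam θ k) (Icc 0 x₁) ∧ StrictAntiOn (critLam θ k) (Icc x₁ x₂) ∧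
      StrictMonoOn (critLam θ k) (Ici x₂) := by
  refine ⟨strictMonoOn_critLam hθ hk (convex_Icc _ _) Icc_subset_Ici_self fun x hx => ?_,
    strictAntiOn_critLam hθ hk (convex_Icc _ _)
      (Icc_subset_Ici_self.trans (Ici_subset_Ici.2 h₁.le)) fun x hx => ?_,
    strictMonoOn_critLam hθ hk (convex_Ici _) (Ici_subset_Ici.2 (h₁.trans h₁₂).le)
      fun x hx => ?_⟩
  all_goals
    simp only [interior_Icc, interior_Ici, mem_Ioo, mem_Ioi] at hx
    rw [hfac]
    nlinarith

end CritLam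

def wrFixedPoints (θ lam : ℝ) (k : ℕ) : Set (ℝ × ℝ) :=
  {p | 0 < p.1 ∧ 0 < p.2 ∧
    p.1 = lam * ((1 + p.1 + θ * p.2) / (1 + p.1 + p.2)) ^ k ∧
    p.2 = lam * ((1 + θ * p.1 + p.2) / (1 + p.1 + p.2)) ^ k}

section FixedPoints

variable {θ lam : ℝ} {k : ℕ}

theorem le_of_fixedPoint (hθ : 1 < θ) (hk : k ≠ 0) {u v : ℝ} (hu : 0 < u) (hv : 0 < v)
    (hequ : u = lam * ((1 + u + θ * v) / (1 + u + v)) ^ k)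
    (heqv : v = lam * ((1 + θ * u + v) / (1 + u + v)) ^ k) : v ≤ u := by
  by_contra! huv
  have hbase : (1 + θ * u + v) / (1 + u + v) < (1 + u + θ * v) / (1 + u + v) :=
    div_lt_div_of_pos_right (by nlinarith) (by positivity)
  have hlam : 0 < lam := (pos_iff_pos_of_mul_pos (hequ ▸ hu)).2 (by positivity)
  have := mul_lt_mul_of_pos_left (pow_lt_pow_left₀ hbase (by positivity) hk) hlam
  linarith

theorem fst_eq_snd_of_mem_wrFixedPoints (hθ : 1 < θ) (hk : k ≠ 0) {p : ℝ × ℝ}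
    (hp : p ∈ wrFixedPoints θ lam k) : p.1 = p.2 := by
  obtain ⟨h₁, h₂, heq₁, heq₂⟩ := hp
  refine le_antisymm (le_of_fixedPoint (lam := lam) hθ hk h₂ h₁ ?_ ?_)
    (le_of_fixedPoint hθ hk h₁ h₂ heq₁ heq₂)
  · convert heq₂ using 4 <;> ring
  · convert heq₁ using 4 <;> ring

theorem critLam_mul (hθ : 0 < 1 + θ) {z : ℝ} (hz : 0 < z) :
    critLam θ k ((1 + θ) * z) = z / ((1 + z + θ * z) / (1 + z + z)) ^ k := by
  have hden : 0 < 1 + z + θ * z := by nlinarith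
  have hbase : (1 + θ + 2 * ((1 + θ) * z)) / (2 * (1 + (1 + θ) * z)) =
      (1 + θ) / 2 * ((1 + z + θ * z) / (1 + z + z))⁻¹ := by
    field_simp
    ring
  rw [critLam, hbase, mul_pow, inv_pow, div_pow, pow_succ]
  field_simp

theorem diag_mem_wrFixedPoints_iff (hθ : 0 < 1 + θ) {z : ℝ} (hz : 0 < z) :
    (z, z) ∈ wrFixedPoints θ lam k ↔ critLam θ k ((1 + θ) * z) = lam := by
  have hden : 0 < 1 + z + θ * z := by nlinarith
  have hpow : 0 < ((1 + z + θ * z) / (1 + z + z)) ^ k := by positivity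
  rw [critLam_mul hθ hz, div_eq_iff hpow.ne']
  simp only [wrFixedPoints, mem_ofPred_eq, hz, true_and]
  constructor
  · exact fun h => h.1
  · exact fun h => ⟨h, by convert h using 4; ring⟩

theorem encard_wrFixedPoints (hθ : 1 < θ) (hk : k ≠ 0) :
    (wrFixedPoints θ lam k).encard = {x | 0 < x ∧ critLam θ k x = lam}.encard := by
  have hθ' : 0 < 1 + θ := by linarith
  have himage : wrFixedPoints θ lam k =
      (fun x => (x / (1 + θ), x / (1 + θ))) '' {x | 0 < x ∧ critLam θ k x = lam} := by
    ext ⟨u, v⟩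
    constructor
    · intro hp
      obtain rfl : u = v := fst_eq_snd_of_mem_wrFixedPoints hθ hk hp
      have hu : 0 < u := hp.1
      refine ⟨(1 + θ) * u, ⟨by positivity, (diag_mem_wrFixedPoints_iff hθ' hu).1 hp⟩, ?_⟩
      simp only [mul_div_cancel_left₀ u hθ'.ne']
    · rintro ⟨x, ⟨hx, hcl⟩, he⟩
      obtain ⟨rfl, rfl⟩ := Prod.mk.inj he
      rw [diag_mem_wrFixedPoints_iff hθ' (by positivity), mul_div_cancel₀ x hθ'.ne']
      exact hcl
  rw [himage, InjOn.encard_image]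
  intro x _ y _ h
  exact (div_left_inj' hθ'.ne').1 (Prod.mk.inj h).1

end FixedPoints

/-- Antiferromagnetic case `θ > 1` of the Soft-Core Widom–Rowlinson model:
number of positive solutions of the fixed-point system (★) according to the
critical values `θ_cr` and `λ_{cr,1}, λ_{cr,2}`. -/
theorem stmt_3 (k : ℕ) (hk : 2 ≤ k) (θ : ℝ) (hθ : 1 < θ) :
    (θ ≤ 2 * (((k : ℝ) + 1) / ((k : ℝ) - 1)) ^ 2 - 1 →
      ∀ lam : ℝ, 0 < lam →
        {p : ℝ × ℝ | 0 < p.1 ∧ 0 < p.2 ∧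
          p.1 = lam * ((1 + p.1 + θ * p.2) / (1 + p.1 + p.2)) ^ k ∧
          p.2 = lam * ((1 + θ * p.1 + p.2) / (1 + p.1 + p.2)) ^ k}.encard = 1) ∧
    (2 * (((k : ℝ) + 1) / ((k : ℝ) - 1)) ^ 2 - 1 < θ →
      ∃ x₁ x₂ : ℝ, 0 < x₁ ∧ x₁ < x₂ ∧
        2 * x₁ ^ 2 + (4 - (θ - 1) * ((k : ℝ) - 1)) * x₁ + (θ + 1) = 0 ∧
        2 * x₂ ^ 2 + (4 - (θ - 1) * ((k : ℝ) - 1)) * x₂ + (θ + 1) = 0 ∧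
        (2 ^ k * x₂ / (1 + θ) ^ (k + 1)) * ((1 + θ + 2 * x₂) / (2 * (1 + x₂))) ^ k <
          (2 ^ k * x₁ / (1 + θ) ^ (k + 1)) * ((1 + θ + 2 * x₁) / (2 * (1 + x₁))) ^ k ∧
        ∀ lam : ℝ, 0 < lam →
          ((lam < (2 ^ k * x₂ / (1 + θ) ^ (k + 1)) * ((1 + θ + 2 * x₂) / (2 * (1 + x₂))) ^ k ∨
            (2 ^ k * x₁ / (1 + θ) ^ (k + 1)) * ((1 + θ + 2 * x₁) / (2 * (1 + x₁))) ^ k < lam) →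
            {p : ℝ × ℝ | 0 < p.1 ∧ 0 < p.2 ∧
              p.1 = lam * ((1 + p.1 + θ * p.2) / (1 + p.1 + p.2)) ^ k ∧
              p.2 = lam * ((1 + θ * p.1 + p.2) / (1 + p.1 + p.2)) ^ k}.encard = 1) ∧
          ((lam = (2 ^ k * x₂ / (1 + θ) ^ (k + 1)) * ((1 + θ + 2 * x₂) / (2 * (1 + x₂))) ^ k ∨
            lam = (2 ^ k * x₁ / (1 + θ) ^ (k + 1)) * ((1 + θ + 2 * x₁) / (2 * (1 + x₁))) ^ k) →
            {p : ℝ × ℝ | 0 < p.1 ∧ 0 < p.2 ∧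
              p.1 = lam * ((1 + p.1 + θ * p.2) / (1 + p.1 + p.2)) ^ k ∧
              p.2 = lam * ((1 + θ * p.1 + p.2) / (1 + p.1 + p.2)) ^ k}.encard = 2) ∧
          ((2 ^ k * x₂ / (1 + θ) ^ (k + 1)) * ((1 + θ + 2 * x₂) / (2 * (1 + x₂))) ^ k < lam ∧
            lam < (2 ^ k * x₁ / (1 + θ) ^ (k + 1)) * ((1 + θ + 2 * x₁) / (2 * (1 + x₁))) ^ k →
            {p : ℝ × ℝ | 0 < p.1 ∧ 0 < p.2 ∧
              p.1 = lam * ((1 + p.1 + θ * p.2) / (1 + p.1 + p.2)) ^ k ∧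
              p.2 = lam * ((1 + θ * p.1 + p.2) / (1 + p.1 + p.2)) ^ k}.encard = 3)) := by
  have hk₀ : k ≠ 0 := by omega
  have hθ₀ : 0 < 1 + θ := by linarith
  have hcont := continuousOn_critLam (k := k) hθ₀
  have htop := tendsto_critLam_atTop (k := k) (by linarith : (0 : ℝ) ≤ θ)
  refine ⟨fun hcr lam hlam => ?_, fun hcr => ?_⟩
  · have hd : discrim 2 (4 - (θ - 1) * ((k : ℝ) - 1)) (θ + 1) ≤ 0 := by
      rw [discrim_critQuad (by norm_cast; omega)]
      exact mul_nonpos_of_nonneg_of_nonpos (by positivity) (sub_nonpos.2 hcr)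
    have hcount := encard_pos_fiber_of_strictMonoOn
      (strictMonoOn_critLam_of_discrim_nonpos hθ₀ hk₀ hd) hcont htop critLam_zero hlam
    rwa [← encard_wrFixedPoints hθ hk₀] at hcount
  · obtain ⟨x₁, x₂, h₁, h₁₂, hfac⟩ := exists_roots_critQuad hθ hk hcr
    obtain ⟨hmono₁, hanti, hmono₂⟩ := critLam_up_down_up hθ₀ hk₀ h₁ h₁₂ hfac
    refine ⟨x₁, x₂, h₁, h₁₂, (by rw [hfac]; ring : critQuad θ k x₁ = 0),
      (by rw [hfac]; ring : critQuad θ k x₂ = 0), hanti ⟨le_rfl, h₁₂.le⟩ ⟨h₁₂.le, le_rfl⟩ h₁₂,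
      fun lam hlam => ?_⟩
    have hcount := encard_pos_fiber_of_up_down_up h₁ h₁₂ hmono₁ hanti hmono₂ hcont htop
      critLam_zero hlam
    rwa [← encard_wrFixedPoints hθ hk₀] at hcount
end

section
/- For any integer k ≥ 2, any λ > 0 and any θ with 0 < θ < 1, the equation x = λ·((1 + (1+θ)x)/(1 + 2x))^k has exactly one positive solution x*; equivalently, the fixed-point system (★) has exactly one positive solution on the diagonal y = x. -/
/-!
For `θ ≤ 1` the ratio `(1 + (1 + θ) x) / (1 + 2 x)` decreases on `[0, ∞)` from its value `1` at
`0`, so the right-hand side `h` is continuous and antitone there, with `h 0 = λ > 0`. Then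
`x - h x` is strictly increasing, negative at `0` and nonnegative at `h 0`, which gives exactly
one positive root by the intermediate value theorem.
-/

open Set

theorem existsUnique_pos_eq_of_antitoneOn {h : ℝ → ℝ} (hanti : AntitoneOn h (Ici 0))
    (hcont : ContinuousOn h (Ici 0)) (h0 : 0 < h 0) : ∃! x : ℝ, 0 < x ∧ x = h x := by
  have hmono : StrictMonoOn (fun x => x - h x) (Ici 0) := fun x hx y hy hxy => by
    linarith [hanti hx hy hxy.le]
  have hh0_le : h (h 0) ≤ h 0 := hanti (mem_Ici.2 le_rfl) h0.le h0.le
  have hsub : Icc (0 - h 0) (h 0 - h (h 0)) ⊆ (fun x => x - h x) '' Icc 0 (h 0) :=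
    intermediate_value_Icc h0.le <| continuousOn_id.sub (hcont.mono fun x hx => hx.1)
  obtain ⟨c, ⟨hc0, -⟩, hc⟩ := hsub (show (0 : ℝ) ∈ _ from ⟨by linarith, by linarith⟩)
  have hc_pos : 0 < c := hc0.lt_of_ne (by rintro rfl; linarith [show (0 : ℝ) - h 0 = 0 from hc])
  refine ⟨c, ⟨hc_pos, by linarith [show c - h c = 0 from hc]⟩, ?_⟩
  rintro x ⟨hx_pos, hx⟩
  exact hmono.injOn (mem_Ici.2 hx_pos.le) (mem_Ici.2 hc_pos.le) (by simp only [hc]; linarith)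

theorem diagonal_ratio_nonneg {θ x : ℝ} (hθ : -1 ≤ θ) (hx : 0 ≤ x) :
    0 ≤ (1 + (1 + θ) * x) / (1 + 2 * x) :=
  div_nonneg (by nlinarith) (by linarith)

theorem antitoneOn_diagonal_ratio {θ : ℝ} (hθ : θ ≤ 1) :
    AntitoneOn (fun x : ℝ => (1 + (1 + θ) * x) / (1 + 2 * x)) (Ici 0) := by
  intro x hx y hy hxy
  simp only [mem_Ici] at hx hy
  rw [div_le_div_iff₀ (by linarith) (by linarith)]
  nlinarith

theorem antitoneOn_diagonal_rhs (k : ℕ) {lam θ : ℝ} (hlam : 0 ≤ lam) (hθ0 : -1 ≤ θ)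
    (hθ1 : θ ≤ 1) :
    AntitoneOn (fun x : ℝ => lam * ((1 + (1 + θ) * x) / (1 + 2 * x)) ^ k) (Ici 0) :=
  fun _ hx _ hy hxy => mul_le_mul_of_nonneg_left
    (pow_le_pow_left₀ (diagonal_ratio_nonneg hθ0 hy) (antitoneOn_diagonal_ratio hθ1 hx hy hxy) k)
    hlam

theorem continuousOn_diagonal_rhs (k : ℕ) (lam θ : ℝ) :
    ContinuousOn (fun x : ℝ => lam * ((1 + (1 + θ) * x) / (1 + 2 * x)) ^ k) (Ici 0) :=
  continuousOn_const.mul <| (ContinuousOn.div (by fun_prop) (by fun_prop)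
    fun x hx => by simp only [mem_Ici] at hx; linarith).pow k

theorem stmt_4_general (k : ℕ) (lam θ : ℝ) (hlam : 0 < lam)
    (hθ0 : 0 < θ) (hθ1 : θ < 1) :
    ∃! x : ℝ, 0 < x ∧ x = lam * ((1 + (1 + θ) * x) / (1 + 2 * x)) ^ k :=
  existsUnique_pos_eq_of_antitoneOn (antitoneOn_diagonal_rhs k hlam.le (by linarith) hθ1.le)
    (continuousOn_diagonal_rhs k lam θ) (by simpa using hlam)

/-- For `k ≥ 2`, `λ > 0`, `0 < θ < 1`, the diagonal equation
`x = λ·((1+(1+θ)x)/(1+2x))^k` has exactly one positive solution. -/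
theorem stmt_4 (k : ℕ) (hk : 2 ≤ k) (lam θ : ℝ) (hlam : 0 < lam)
    (hθ0 : 0 < θ) (hθ1 : θ < 1) :
    ∃! x : ℝ, 0 < x ∧ x = lam * ((1 + (1 + θ) * x) / (1 + 2 * x)) ^ k :=
  stmt_4_general k lam θ hlam hθ0 hθ1
end

section
/- Let k = 2 and 0 < θ < 1. If (x, y) is a positive solution of the fixed-point system (★) with x ≠ y, then 1 + x + y = (λ(1−θ²) + (1−θ)·√(λ²(1+θ)² + 4λ))/2. -/
/-!
Write `s = 1 + x + y`. Clearing denominators and subtracting the two equations of (★), the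
difference `(1 + x + θy)² - (1 + θx + y)²` factors as `(1 - θ)(x - y)((1 + θ)s + 1 - θ)`, so
cancelling `x - y` leaves the quadratic `s² = λ(1 - θ²)s + λ(1 - θ)²`. Its constant term is
nonnegative, so the positive number `s` is its larger root.
-/

theorem eq_div_two_of_sq_eq_mul_add {b c s : ℝ} (hc : 0 ≤ c) (hs : 0 < s)
    (h : s ^ 2 = b * s + c) : s = (b + √(b ^ 2 + 4 * c)) / 2 := by
  have hbs : b ≤ s := by nlinarith
  have hroot : √(b ^ 2 + 4 * c) = 2 * s - b := by
    rw [show b ^ 2 + 4 * c = (2 * s - b) ^ 2 by linear_combination -4 * h]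
    exact Real.sqrt_sq (by linarith)
  rw [hroot]
  ring

theorem sq_eq_of_fixedPoint_two_of_ne {lam θ x y : ℝ} (hs : 1 + x + y ≠ 0) (hxy : x ≠ y)
    (h1 : x = lam * ((1 + x + θ * y) / (1 + x + y)) ^ 2)
    (h2 : y = lam * ((1 + θ * x + y) / (1 + x + y)) ^ 2) :
    (1 + x + y) ^ 2 = lam * (1 - θ ^ 2) * (1 + x + y) + lam * (1 - θ) ^ 2 := by
  have e1 : x * (1 + x + y) ^ 2 = lam * (1 + x + θ * y) ^ 2 := by
    nth_rw 1 [h1]; field_simp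
  have e2 : y * (1 + x + y) ^ 2 = lam * (1 + θ * x + y) ^ 2 := by
    nth_rw 1 [h2]; field_simp
  apply mul_left_cancel₀ (sub_ne_zero.mpr hxy)
  linear_combination e1 - e2

theorem stmt_5_general (lam θ : ℝ) (hlam : 0 < lam) (hθ1 : θ < 1)
    (x y : ℝ) (hx : 0 < x) (hy : 0 < y) (hxy : x ≠ y)
    (h1 : x = lam * ((1 + x + θ * y) / (1 + x + y)) ^ 2)
    (h2 : y = lam * ((1 + θ * x + y) / (1 + x + y)) ^ 2) :
    1 + x + y =
      (lam * (1 - θ ^ 2) + (1 - θ) * Real.sqrt (lam ^ 2 * (1 + θ) ^ 2 + 4 * lam)) / 2 := by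
  have hs : 0 < 1 + x + y := by linarith
  have hquad := sq_eq_of_fixedPoint_two_of_ne hs.ne' hxy h1 h2
  rw [eq_div_two_of_sq_eq_mul_add (by positivity) hs hquad]
  have hdisc : (lam * (1 - θ ^ 2)) ^ 2 + 4 * (lam * (1 - θ) ^ 2)
      = (1 - θ) ^ 2 * (lam ^ 2 * (1 + θ) ^ 2 + 4 * lam) := by ring
  rw [hdisc, Real.sqrt_mul (sq_nonneg _), Real.sqrt_sq (by linarith)]

/-- For `k = 2`, `0 < θ < 1`: any positive solution of (★) with `x ≠ y` satisfies
`1 + x + y = (λ(1−θ²) + (1−θ)√(λ²(1+θ)² + 4λ))/2`. -/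
theorem stmt_5 (lam θ : ℝ) (hlam : 0 < lam) (hθ0 : 0 < θ) (hθ1 : θ < 1)
    (x y : ℝ) (hx : 0 < x) (hy : 0 < y) (hxy : x ≠ y)
    (h1 : x = lam * ((1 + x + θ * y) / (1 + x + y)) ^ 2)
    (h2 : y = lam * ((1 + θ * x + y) / (1 + x + y)) ^ 2) :
    1 + x + y =
      (lam * (1 - θ ^ 2) + (1 - θ) * Real.sqrt (lam ^ 2 * (1 + θ) ^ 2 + 4 * lam)) / 2 :=
  stmt_5_general lam θ hlam hθ1 x y hx hy hxy h1 h2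
end

section
/- Let k = 3 and 0 < θ < 1. If (u, v) is a positive solution of the system (★★) with u ≠ v, then, writing s = u + v, one has (1+2θ)·s·uv = 1 + θs³ and s·(s³ − 2) = a·((1+θ)s³ − 1). -/
/-!
Multiplying the first equation by `v` and the second by `u` makes the left-hand sides agree, so
`u·(2) − v·(1)` leaves `a (v − u) (1 − uv s + θ s (u² + v²)) = 0`; as `a ≠ 0` and `u ≠ v`, the last
factor vanishes, which is the first identity. Adding the two equations and eliminating
`u³ + v³ = s³ − 3uv s` with the first identity gives the second one multiplied by `1 − θ`.
-/

section WidomRowlinsonCubic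

variable {K : Type*} [Field K] {a θ u v : K}

theorem mul_sum_mul_prod_eq_of_asymmetric_solution (ha : a ≠ 0) (huv : u ≠ v)
    (h1 : u * (1 + u ^ 3 + v ^ 3) = a * (1 + u ^ 3 + θ * v ^ 3))
    (h2 : v * (1 + u ^ 3 + v ^ 3) = a * (1 + θ * u ^ 3 + v ^ 3)) :
    (1 + 2 * θ) * (u + v) * (u * v) = 1 + θ * (u + v) ^ 3 := by
  have hvu : v - u ≠ 0 := sub_ne_zero.mpr huv.symm
  have hfactored : a * (v - u) * (1 - u * v * (u + v) + θ * (u + v) * (u ^ 2 + v ^ 2)) = 0 := by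
    linear_combination u * h2 - v * h1
  have hbracket : 1 - u * v * (u + v) + θ * (u + v) * (u ^ 2 + v ^ 2) = 0 :=
    (mul_eq_zero.mp hfactored).resolve_left (mul_ne_zero ha hvu)
  linear_combination -hbracket

theorem sum_mul_eq_of_mul_sum_mul_prod_eq (hθ : θ ≠ 1)
    (h1 : u * (1 + u ^ 3 + v ^ 3) = a * (1 + u ^ 3 + θ * v ^ 3))
    (h2 : v * (1 + u ^ 3 + v ^ 3) = a * (1 + θ * u ^ 3 + v ^ 3))
    (hprod : (1 + 2 * θ) * (u + v) * (u * v) = 1 + θ * (u + v) ^ 3) :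
    (u + v) * ((u + v) ^ 3 - 2) = a * ((1 + θ) * (u + v) ^ 3 - 1) := by
  have hθ' : 1 - θ ≠ 0 := sub_ne_zero.mpr hθ.symm
  have hscaled : (1 - θ) * ((u + v) * ((u + v) ^ 3 - 2) - a * ((1 + θ) * (u + v) ^ 3 - 1)) = 0 := by
    linear_combination (1 + 2 * θ) * (h1 + h2) + (3 * (u + v) - 3 * a * (1 + θ)) * hprod
  exact sub_eq_zero.mp ((mul_eq_zero.mp hscaled).resolve_left hθ')

end WidomRowlinsonCubic

theorem stmt_7_general (a θ : ℝ) (ha : 0 < a) (hθ1 : θ < 1)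
    (u v : ℝ) (huv : u ≠ v)
    (h1 : u * (1 + u ^ 3 + v ^ 3) = a * (1 + u ^ 3 + θ * v ^ 3))
    (h2 : v * (1 + u ^ 3 + v ^ 3) = a * (1 + θ * u ^ 3 + v ^ 3)) :
    (1 + 2 * θ) * (u + v) * (u * v) = 1 + θ * (u + v) ^ 3 ∧
      (u + v) * ((u + v) ^ 3 - 2) = a * ((1 + θ) * (u + v) ^ 3 - 1) := by
  have hprod := mul_sum_mul_prod_eq_of_asymmetric_solution ha.ne' huv h1 h2
  exact ⟨hprod, sum_mul_eq_of_mul_sum_mul_prod_eq hθ1.ne h1 h2 hprod⟩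

/-- For `k = 3`, `0 < θ < 1`: if `(u, v)` is a positive solution of (★★) with `u ≠ v`,
then, with `s = u + v`, one has `(1+2θ)·s·uv = 1 + θs³` and `s(s³ − 2) = a((1+θ)s³ − 1)`. -/
theorem stmt_7 (a θ : ℝ) (ha : 0 < a) (hθ0 : 0 < θ) (hθ1 : θ < 1)
    (u v : ℝ) (hu : 0 < u) (hv : 0 < v) (huv : u ≠ v)
    (h1 : u * (1 + u ^ 3 + v ^ 3) = a * (1 + u ^ 3 + θ * v ^ 3))
    (h2 : v * (1 + u ^ 3 + v ^ 3) = a * (1 + θ * u ^ 3 + v ^ 3)) :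
    (1 + 2 * θ) * (u + v) * (u * v) = 1 + θ * (u + v) ^ 3 ∧
      (u + v) * ((u + v) ^ 3 - 2) = a * ((1 + θ) * (u + v) ^ 3 - 1) :=
  stmt_7_general a θ ha hθ1 u v huv h1 h2
end

section
/- Let k = 3 and 0 < θ < 1 (ferromagnetic case). (1) If θ ≥ 1/2, then for every λ > 0 the system (★) has exactly one positive solution. (2) If θ < 1/2 and λ ≤ (1/(2−4θ))·(4/3)³, then (★) has exactly one positive solution. (3) If θ < 1/2 and λ > (1/(2−4θ))·(4/3)³, then (★) has exactly three positive solutions. -/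
/-!
In the unknowns `a = (1 + x + θy)/(1 + x + y)` and `b = (1 + θx + y)/(1 + x + y)` the system (★)
becomes `x = λa³`, `y = λb³` together with two polynomial equations in `(a, b)`. On the diagonal
`a = b` these reduce to `λa³(2a - 1 - θ) = 1 - a`, which has exactly one positive root. Off the
diagonal, adding the two equations and dividing their difference by `a - b` shows that `s = a + b`
and `p = ab` satisfy `λs³(s - 1 - θ) = 2s - 1` and `p(2s - 1) = (s - 1)s²`; positivity and
`s² - 4p = (a - b)² > 0` force `1 + θ < s < 3/2`, and conversely every such `s` yields the two
solutions `(a, b)`, `(b, a)`. Since `(2s - 1)/(s³(s - 1 - θ))` is decreasing in `s`, there is at most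
one such `s`, and there is one iff `λ` exceeds its value `32/(27(1 - 2θ))` at `s = 3/2`.
-/

open Set

namespace WidomRowlinson

variable {lam θ : ℝ}

def fixedPoints (lam θ : ℝ) : Set (ℝ × ℝ) :=
  {p | 0 < p.1 ∧ 0 < p.2 ∧
    p.1 = lam * ((1 + p.1 + θ * p.2) / (1 + p.1 + p.2)) ^ 3 ∧
    p.2 = lam * ((1 + θ * p.1 + p.2) / (1 + p.1 + p.2)) ^ 3}

/-- The system (★) in the unknowns `a = (1 + x + θ y) / (1 + x + y)` and
`b = (1 + θ x + y) / (1 + x + y)`, which determine `x = λ a³` and `y = λ b³`. -/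
def ratioPoints (lam θ : ℝ) : Set (ℝ × ℝ) :=
  {q | 0 < q.1 ∧ 0 < q.2 ∧
    q.1 * (1 + lam * q.1 ^ 3 + lam * q.2 ^ 3) = 1 + lam * q.1 ^ 3 + θ * (lam * q.2 ^ 3) ∧
    q.2 * (1 + lam * q.1 ^ 3 + lam * q.2 ^ 3) = 1 + θ * (lam * q.1 ^ 3) + lam * q.2 ^ 3}

theorem fixedPoints_eq_image (hlam : 0 < lam) (hθ : 0 < θ) :
    fixedPoints lam θ = (fun q : ℝ × ℝ => (lam * q.1 ^ 3, lam * q.2 ^ 3)) '' ratioPoints lam θ := by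
  ext ⟨x, y⟩
  simp only [fixedPoints, ratioPoints, mem_ofPred_eq, mem_image, Prod.mk.injEq, Prod.exists]
  constructor
  · rintro ⟨hx, hy, ex, ey⟩
    have hT : 1 + x + y ≠ 0 := by positivity
    refine ⟨_, _, ⟨by positivity, by positivity, ?_, ?_⟩, ex.symm, ey.symm⟩ <;>
      rw [← ex, ← ey, div_mul_cancel₀ _ hT]
  · rintro ⟨a, b, ⟨ha, hb, ea, eb⟩, rfl, rfl⟩
    have hT : 1 + lam * a ^ 3 + lam * b ^ 3 ≠ 0 := by positivity
    exact ⟨by positivity, by positivity, by rw [← ea, mul_div_cancel_right₀ _ hT],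
      by rw [← eb, mul_div_cancel_right₀ _ hT]⟩

theorem encard_fixedPoints (hlam : 0 < lam) (hθ : 0 < θ) :
    (fixedPoints lam θ).encard = (ratioPoints lam θ).encard := by
  rw [fixedPoints_eq_image hlam hθ]
  refine Function.Injective.encard_image (fun p q h => ?_) _
  have cube_inj := (Odd.strictMono_pow (R := ℝ) (by decide : Odd 3)).injective
  simp only [Prod.mk.injEq, mul_right_inj' hlam.ne'] at h
  exact Prod.ext (cube_inj h.1) (cube_inj h.2)

theorem swap_mem_ratioPoints {a b : ℝ} (h : (a, b) ∈ ratioPoints lam θ) :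
    (b, a) ∈ ratioPoints lam θ := by
  obtain ⟨ha, hb, ea, eb⟩ := h
  exact ⟨hb, ha, by linear_combination eb, by linear_combination ea⟩

theorem diag_mem_ratioPoints_iff {a : ℝ} :
    (a, a) ∈ ratioPoints lam θ ↔ 0 < a ∧ lam * a ^ 3 * (2 * a - 1 - θ) = 1 - a := by
  refine ⟨fun ⟨ha, _, ea, _⟩ => ⟨ha, by linear_combination ea⟩,
    fun ⟨ha, e⟩ => ⟨ha, ha, by linear_combination e, by linear_combination e⟩⟩

theorem exists_diag_mem_ratioPoints (hlam : 0 < lam) (hθ : θ < 1) :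
    ∃ a, (a, a) ∈ ratioPoints lam θ := by
  let G : ℝ → ℝ := fun a => lam * a ^ 3 * (2 * a - 1 - θ) - (1 - a)
  have hG : (0 : ℝ) ∈ Ioo (G 0) (G 1) := ⟨by simp [G], by simp [G]; nlinarith⟩
  obtain ⟨a, ha, hGa⟩ := intermediate_value_Ioo zero_le_one (by fun_prop) hG
  exact ⟨a, diag_mem_ratioPoints_iff.2 ⟨ha.1, sub_eq_zero.1 hGa⟩⟩

theorem diag_unique {a a' : ℝ} (hlam : 0 < lam) (hθ : θ < 1) (h : (a, a) ∈ ratioPoints lam θ)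
    (h' : (a', a') ∈ ratioPoints lam θ) : a = a' := by
  wlog hlt : a < a' generalizing a a'
  · rcases (not_lt.1 hlt).lt_or_eq with hgt | heq
    exacts [(this h' h hgt).symm, heq.symm]
  obtain ⟨ha, e⟩ := diag_mem_ratioPoints_iff.1 h
  obtain ⟨-, e'⟩ := diag_mem_ratioPoints_iff.1 h'
  have h2a : 1 + θ ≤ 2 * a := by
    by_contra! hc
    nlinarith [mul_neg_of_pos_of_neg (by positivity : 0 < lam * a ^ 3) (by linarith : 2 * a - 1 - θ < 0)]
  have : lam * a ^ 3 * (2 * a - 1 - θ) < lam * a' ^ 3 * (2 * a' - 1 - θ) := by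
    gcongr; linarith
  linarith

theorem eq_or_eq_swap_of_add_eq_of_mul_eq {R : Type*} [CommRing R] [NoZeroDivisors R]
    {a b c d : R} (hs : a + b = c + d) (hp : a * b = c * d) :
    (a, b) = (c, d) ∨ (a, b) = (d, c) := by
  have h : (a - c) * (a - d) = 0 := by linear_combination a * hs - hp
  rcases mul_eq_zero.1 h with h | h
  · exact .inl (Prod.ext (by linear_combination h) (by linear_combination hs - h))
  · exact .inr (Prod.ext (by linear_combination h) (by linear_combination hs - h))

def IsOffDiagSum (lam θ s : ℝ) : Prop :=
  1 + θ < s ∧ s < 3 / 2 ∧ lam * s ^ 3 * (s - 1 - θ) = 2 * s - 1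

theorem isOffDiagSum_of_mem {a b : ℝ} (hlam : 0 < lam) (hθ : θ < 1)
    (h : (a, b) ∈ ratioPoints lam θ) (hab : a ≠ b) :
    IsOffDiagSum lam θ (a + b) ∧ a * b * (2 * (a + b) - 1) = (a + b - 1) * (a + b) ^ 2 := by
  obtain ⟨ha, hb, ea, eb⟩ := h
  have hsum : lam * (a ^ 3 + b ^ 3) * (a + b - 1 - θ) = 2 - (a + b) := by
    linear_combination ea + eb
  have hdiff : 1 + lam * (a ^ 3 + b ^ 3) = (1 - θ) * lam * (a ^ 2 + a * b + b ^ 2) :=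
    mul_left_cancel₀ (sub_ne_zero.2 hab) (by linear_combination ea - eb)
  have hq : lam * (a ^ 2 + a * b + b ^ 2) * (a + b - 1 - θ) = 1 :=
    mul_left_cancel₀ (sub_ne_zero.2 hθ.ne')
      (by linear_combination hsum - (a + b - 1 - θ) * hdiff)
  have hs : 1 + θ < a + b := by
    have := pos_of_mul_pos_right (hq ▸ one_pos) (by positivity)
    linarith
  have hw : lam * (a + b) * (a * b) * (a + b - 1 - θ) = a + b - 1 := by
    linear_combination ((a + b) * hq - hsum) / 2
  have hu : lam * (a + b) ^ 3 * (a + b - 1 - θ) = 2 * (a + b) - 1 := by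
    linear_combination hsum + 3 * hw
  have hp : a * b * (2 * (a + b) - 1) = (a + b - 1) * (a + b) ^ 2 := by
    linear_combination (a + b) ^ 2 * hw - a * b * hu
  have hs1 : 1 < a + b := by
    have : 0 < lam * (a + b) * (a * b) * (a + b - 1 - θ) := mul_pos (by positivity) (by linarith)
    linarith
  have hdisc : (a + b) ^ 2 * (3 - 2 * (a + b)) = (2 * (a + b) - 1) * (a - b) ^ 2 := by
    linear_combination 4 * hp
  have h32 : 0 < 3 - 2 * (a + b) := pos_of_mul_pos_right
    (hdisc ▸ mul_pos (by linarith) (sq_pos_iff.2 (sub_ne_zero.2 hab))) (by positivity)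
  exact ⟨⟨hs, by linarith, hu⟩, hp⟩

theorem mem_ratioPoints_of_sum_prod {a b : ℝ} (ha : 0 < a) (hb : 0 < b) (hs : 1 + θ < a + b)
    (hu : lam * (a + b) ^ 3 * (a + b - 1 - θ) = 2 * (a + b) - 1)
    (hw : lam * (a + b) * (a * b) * (a + b - 1 - θ) = a + b - 1) :
    (a, b) ∈ ratioPoints lam θ := by
  have hq : lam * (a ^ 2 + a * b + b ^ 2) * (a + b - 1 - θ) = 1 :=
    mul_left_cancel₀ (by positivity : a + b ≠ 0) (by linear_combination hu - hw)
  have hsum : lam * (a ^ 3 + b ^ 3) * (a + b - 1 - θ) = 2 - (a + b) := by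
    linear_combination hu - 3 * hw
  have hdiff : 1 + lam * (a ^ 3 + b ^ 3) = (1 - θ) * lam * (a ^ 2 + a * b + b ^ 2) :=
    mul_right_cancel₀ (sub_ne_zero.2 (by linarith : a + b - 1 ≠ θ))
      (by linear_combination hsum - (1 - θ) * hq)
  exact ⟨ha, hb, by linear_combination (hsum + (a - b) * hdiff) / 2,
    by linear_combination (hsum - (a - b) * hdiff) / 2⟩

theorem cube_mul_two_mul_sub_one_lt {u v : ℝ} (hu : 1 ≤ u) (huv : u < v) :
    u ^ 3 * (2 * v - 1) < v ^ 3 * (2 * u - 1) := by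
  have hv : 1 < v := hu.trans_lt huv
  have : 0 < u ^ 2 * (2 * v - 1) + u * v * (v - 1) + v ^ 2 * (u - 1) := by
    have := mul_pos (by positivity : (0 : ℝ) < u ^ 2) (by linarith : (0 : ℝ) < 2 * v - 1)
    have := mul_nonneg (by positivity : (0 : ℝ) ≤ u * v) (by linarith : (0 : ℝ) ≤ v - 1)
    have := mul_nonneg (by positivity : (0 : ℝ) ≤ v ^ 2) (by linarith : (0 : ℝ) ≤ u - 1)
    linarith
  nlinarith [mul_pos (sub_pos.2 huv) this]

theorem IsOffDiagSum.eq {s t : ℝ} (hlam : 0 < lam) (hθ : 0 ≤ θ) (hs : IsOffDiagSum lam θ s)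
    (ht : IsOffDiagSum lam θ t) : s = t := by
  wlog hlt : s < t generalizing s t
  · rcases (not_lt.1 hlt).lt_or_eq with hgt | heq
    exacts [(this ht hs hgt).symm, heq.symm]
  obtain ⟨hs1, -, es⟩ := hs
  obtain ⟨-, -, et⟩ := ht
  have := calc (2 * s - 1) * (2 * t - 1)
      = lam * (s - 1 - θ) * (s ^ 3 * (2 * t - 1)) := by rw [← es]; ring
    _ < lam * (t - 1 - θ) * (t ^ 3 * (2 * s - 1)) := by
      have hs0 : 0 < s := by linarith
      have ht0 : 0 < t - 1 - θ := by linarith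
      have ht1 : 0 < 2 * t - 1 := by linarith
      exact mul_lt_mul' (by gcongr) (cube_mul_two_mul_sub_one_lt (by linarith) hlt)
        (by positivity) (by positivity)
    _ = (2 * s - 1) * (2 * t - 1) := by rw [← et]; ring
  exact absurd this (lt_irrefl _)

theorem exists_isOffDiagSum_iff (hlam : 0 < lam) (hθ : 0 ≤ θ) :
    (∃ s, IsOffDiagSum lam θ s) ↔ 32 < lam * (27 * (1 - 2 * θ)) := by
  constructor
  · rintro ⟨s, hs1, hs2, es⟩
    have hθ2 : 0 < 1 - 2 * θ := by linarith
    have hs0 : 0 < s := by linarith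
    have key : 32 * (s ^ 3 * (s - 1 - θ)) < 27 * (1 - 2 * θ) * (2 * s - 1) := by
      have : 0 < 16 * s ^ 3 + (1 - 2 * θ) * (8 * s ^ 2 + 12 * s - 9) :=
        add_pos (by positivity) (mul_pos hθ2 (by nlinarith))
      nlinarith [mul_pos (by linarith : (0 : ℝ) < 3 - 2 * s) this]
    have : 32 * (2 * s - 1) < lam * (27 * (1 - 2 * θ)) * (2 * s - 1) := by
      rw [← es]; nlinarith [mul_lt_mul_of_pos_left key hlam]
    exact lt_of_mul_lt_mul_right this (by linarith)
  · intro h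
    have hθ2 : 1 + θ ≤ 3 / 2 := by nlinarith
    let F : ℝ → ℝ := fun s => lam * s ^ 3 * (s - 1 - θ) - (2 * s - 1)
    have hF : (0 : ℝ) ∈ Ioo (F (1 + θ)) (F (3 / 2)) :=
      ⟨by simp only [F]; linarith, by simp only [F]; linarith⟩
    obtain ⟨s, hs, hFs⟩ := intermediate_value_Ioo hθ2 (by fun_prop) hF
    exact ⟨s, hs.1, hs.2, sub_eq_zero.1 hFs⟩

theorem exists_offDiag_mem_ratioPoints {s : ℝ} (hθ : 0 ≤ θ) (hs : IsOffDiagSum lam θ s) :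
    ∃ A B, B < A ∧ (A, B) ∈ ratioPoints lam θ := by
  obtain ⟨hs1, hs2, es⟩ := hs
  have hs0 : 0 < s := by linarith
  have h2s : 0 < 2 * s - 1 := by linarith
  -- `A` and `B` are the roots of `X² - s X + p`, with the product `p` forced by the sum
  obtain ⟨p, hp⟩ : ∃ p, p * (2 * s - 1) = (s - 1) * s ^ 2 := ⟨_, div_mul_cancel₀ _ h2s.ne'⟩
  have hp0 : 0 < p := pos_of_mul_pos_left (hp ▸ mul_pos (by linarith) (by positivity)) h2s.le
  have hdisc : 0 < s ^ 2 - 4 * p := by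
    have : (s ^ 2 - 4 * p) * (2 * s - 1) = s ^ 2 * (3 - 2 * s) := by linear_combination -4 * hp
    exact pos_of_mul_pos_left (this ▸ mul_pos (by positivity) (by linarith)) h2s.le
  set d := √(s ^ 2 - 4 * p)
  have hd : d ^ 2 = s ^ 2 - 4 * p := Real.sq_sqrt hdisc.le
  have hd0 : 0 < d := Real.sqrt_pos.2 hdisc
  have hds : d < s := by nlinarith
  have hsum : (s + d) / 2 + (s - d) / 2 = s := by ring
  have hprod : (s + d) / 2 * ((s - d) / 2) = p := by linear_combination -hd / 4
  refine ⟨(s + d) / 2, (s - d) / 2, by linarith,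
    mem_ratioPoints_of_sum_prod (by linarith) (by linarith) ?_ ?_ ?_⟩ <;> rw [hsum]
  · exact hs1
  · exact es
  · rw [hprod]
    exact mul_right_cancel₀ h2s.ne' (by linear_combination lam * s * (s - 1 - θ) * hp + (s - 1) * es)

theorem ratioPoints_eq_singleton {a₀ : ℝ} (hlam : 0 < lam) (hθ : θ < 1)
    (hno : ∀ s, ¬IsOffDiagSum lam θ s) (h₀ : (a₀, a₀) ∈ ratioPoints lam θ) :
    ratioPoints lam θ = {(a₀, a₀)} := by
  refine Subset.antisymm (fun ⟨a, b⟩ h => ?_) (singleton_subset_iff.2 h₀)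
  obtain rfl : a = b := by_contra fun hab => hno _ (isOffDiagSum_of_mem hlam hθ h hab).1
  rw [diag_unique hlam hθ h h₀]
  rfl

theorem ratioPoints_eq_triple {a₀ A B : ℝ} (hlam : 0 < lam) (hθ₀ : 0 ≤ θ) (hθ : θ < 1)
    (h₀ : (a₀, a₀) ∈ ratioPoints lam θ) (hAB : (A, B) ∈ ratioPoints lam θ) (hne : A ≠ B) :
    ratioPoints lam θ = {(a₀, a₀), (A, B), (B, A)} := by
  refine Subset.antisymm (fun ⟨a, b⟩ h => ?_) ?_
  · by_cases hab : a = b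
    · subst hab
      rw [diag_unique hlam hθ h h₀]
      exact mem_insert _ _
    obtain ⟨hs, hp⟩ := isOffDiagSum_of_mem hlam hθ h hab
    obtain ⟨hs', hp'⟩ := isOffDiagSum_of_mem hlam hθ hAB hne
    have hsum : a + b = A + B := hs.eq hlam hθ₀ hs'
    have hprod : a * b = A * B :=
      mul_right_cancel₀ (by linarith [hs.1] : 2 * (a + b) - 1 ≠ 0) (by rw [hp, hsum, hp'])
    exact .inr (eq_or_eq_swap_of_add_eq_of_mul_eq hsum hprod)
  · rintro _ (rfl | rfl | rfl)
    exacts [h₀, hAB, swap_mem_ratioPoints hAB]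

theorem threshold_lt_iff (hθ : θ < 1 / 2) :
    1 / (2 - 4 * θ) * (4 / 3) ^ 3 < lam ↔ 32 < lam * (27 * (1 - 2 * θ)) := by
  rw [show 1 / (2 - 4 * θ) * (4 / 3) ^ 3 = 32 / (27 * (1 - 2 * θ)) by
    field_simp [(by linarith : 2 - 4 * θ ≠ 0), (by linarith : 1 - 2 * θ ≠ 0)]; ring,
    div_lt_iff₀ (by linarith)]

theorem encard_fixedPoints_eq_one (hlam : 0 < lam) (hθ₀ : 0 < θ) (hθ : θ < 1)
    (h : ¬32 < lam * (27 * (1 - 2 * θ))) : (fixedPoints lam θ).encard = 1 := by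
  obtain ⟨a₀, h₀⟩ := exists_diag_mem_ratioPoints hlam hθ
  have hno := not_exists.1 (mt (exists_isOffDiagSum_iff hlam hθ₀.le).1 h)
  rw [encard_fixedPoints hlam hθ₀, ratioPoints_eq_singleton hlam hθ hno h₀, encard_singleton]

theorem encard_fixedPoints_eq_three (hlam : 0 < lam) (hθ₀ : 0 < θ) (hθ : θ < 1)
    (h : 32 < lam * (27 * (1 - 2 * θ))) : (fixedPoints lam θ).encard = 3 := by
  obtain ⟨a₀, h₀⟩ := exists_diag_mem_ratioPoints hlam hθ
  obtain ⟨s, hs⟩ := (exists_isOffDiagSum_iff hlam hθ₀.le).2 h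
  obtain ⟨A, B, hBA, hAB⟩ := exists_offDiag_mem_ratioPoints hθ₀.le hs
  have hne : A ≠ B := hBA.ne'
  rw [encard_fixedPoints hlam hθ₀, ratioPoints_eq_triple hlam hθ₀.le hθ h₀ hAB hne]
  exact encard_eq_three.2 ⟨_, _, _,
    fun h => hne ((Prod.mk.inj h).1.symm.trans (Prod.mk.inj h).2),
    fun h => hne ((Prod.mk.inj h).2.symm.trans (Prod.mk.inj h).1),
    fun h => hne (Prod.mk.inj h).1, rfl⟩

end WidomRowlinson

open WidomRowlinson

/-- Ferromagnetic case, `k = 3`: the system (★) has exactly one positive solution if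
`θ ≥ 1/2`, or if `θ < 1/2` and `λ ≤ (1/(2−4θ))·(4/3)³`; and exactly three positive
solutions if `θ < 1/2` and `λ > (1/(2−4θ))·(4/3)³`. -/
theorem stmt_8 (lam θ : ℝ) (hlam : 0 < lam) (hθ0 : 0 < θ) (hθ1 : θ < 1) :
    ((1 : ℝ) / 2 ≤ θ →
      {p : ℝ × ℝ | 0 < p.1 ∧ 0 < p.2 ∧
        p.1 = lam * ((1 + p.1 + θ * p.2) / (1 + p.1 + p.2)) ^ 3 ∧
        p.2 = lam * ((1 + θ * p.1 + p.2) / (1 + p.1 + p.2)) ^ 3}.encard = 1) ∧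
    (θ < 1 / 2 → lam ≤ (1 / (2 - 4 * θ)) * (4 / 3) ^ 3 →
      {p : ℝ × ℝ | 0 < p.1 ∧ 0 < p.2 ∧
        p.1 = lam * ((1 + p.1 + θ * p.2) / (1 + p.1 + p.2)) ^ 3 ∧
        p.2 = lam * ((1 + θ * p.1 + p.2) / (1 + p.1 + p.2)) ^ 3}.encard = 1) ∧
    (θ < 1 / 2 → (1 / (2 - 4 * θ)) * (4 / 3) ^ 3 < lam →
      {p : ℝ × ℝ | 0 < p.1 ∧ 0 < p.2 ∧
        p.1 = lam * ((1 + p.1 + θ * p.2) / (1 + p.1 + p.2)) ^ 3 ∧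
        p.2 = lam * ((1 + θ * p.1 + p.2) / (1 + p.1 + p.2)) ^ 3}.encard = 3) :=
  ⟨fun hθ => encard_fixedPoints_eq_one hlam hθ0 hθ1 (by nlinarith),
    fun hθ hle => encard_fixedPoints_eq_one hlam hθ0 hθ1 (mt (threshold_lt_iff hθ).2 hle.not_gt),
    fun hθ hgt => encard_fixedPoints_eq_three hlam hθ0 hθ1 ((threshold_lt_iff hθ).1 hgt)⟩
end

section
/- For every x in the closed interval [aθ, a], the derivative of γ satisfies γ′(x) = −(x^{2k} + (k+1)x^k − kaθx^{k−1})/(x^k + 1)² < 0; in particular γ is strictly decreasing on [aθ, a]. -/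
/-! The quotient rule gives the derivative. On `[aθ, a]` we have `x ≥ aθ > 0`, hence
`k aθ x^{k-1} ≤ k x^k`, so the numerator is at least `x^{2k} + x^k > 0`. -/

open Set

lemma strictAntiOn_of_hasDerivAt_neg {D : Set ℝ} (hD : Convex ℝ D) {f f' : ℝ → ℝ}
    (hf : ∀ x ∈ D, HasDerivAt f (f' x) x) (hf' : ∀ x ∈ D, f' x < 0) : StrictAntiOn f D :=
  strictAntiOn_of_deriv_neg hD (fun x hx => (hf x hx).continuousAt.continuousWithinAt)
    fun x hx => by
      have hxD := interior_subset hx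
      rw [(hf x hxD).deriv]
      exact hf' x hxD

lemma natCast_mul_pow_sub_one_mul (k : ℕ) (x : ℝ) :
    (k : ℝ) * x ^ (k - 1) * x = k * x ^ k := by
  rcases eq_or_ne k 0 with rfl | hk
  · simp
  · rw [mul_assoc, pow_sub_one_mul hk]

lemma natCast_mul_mul_pow_sub_one_le (k : ℕ) {c x : ℝ} (hc : 0 ≤ c) (hcx : c ≤ x) :
    (k : ℝ) * c * x ^ (k - 1) ≤ k * x ^ k := by
  have hx : 0 ≤ x := hc.trans hcx
  calc (k : ℝ) * c * x ^ (k - 1) ≤ k * x ^ (k - 1) * x := by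
        rw [mul_right_comm]
        gcongr
    _ = k * x ^ k := natCast_mul_pow_sub_one_mul k x

lemma hasDerivAt_sub_add_div_one_add_pow (b c : ℝ) (k : ℕ) {x : ℝ} (hx : 1 + x ^ k ≠ 0) :
    HasDerivAt (fun u : ℝ => b - u + (u - c) / (1 + u ^ k))
      (-((x ^ (2 * k) + ((k : ℝ) + 1) * x ^ k - (k : ℝ) * c * x ^ (k - 1)) /
        (x ^ k + 1) ^ 2)) x := by
  have hdiv : HasDerivAt (fun u : ℝ => (u - c) / (1 + u ^ k))
      ((1 * (1 + x ^ k) - (x - c) * ((k : ℝ) * x ^ (k - 1))) / (1 + x ^ k) ^ 2) x :=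
    ((hasDerivAt_id x).sub_const c).div ((hasDerivAt_pow k x).const_add 1) hx
  refine (((hasDerivAt_id x).const_sub b).add hdiv).congr_deriv ?_
  rw [add_comm (x ^ k) 1]
  field_simp
  rw [pow_mul']
  linear_combination -natCast_mul_pow_sub_one_mul k x

lemma hasDerivAt_sub_add_div_one_add_pow_and_neg (b : ℝ) (k : ℕ) {c x : ℝ} (hc : 0 < c)
    (hcx : c ≤ x) :
    HasDerivAt (fun u : ℝ => b - u + (u - c) / (1 + u ^ k))
      (-((x ^ (2 * k) + ((k : ℝ) + 1) * x ^ k - (k : ℝ) * c * x ^ (k - 1)) /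
        (x ^ k + 1) ^ 2)) x ∧
    -((x ^ (2 * k) + ((k : ℝ) + 1) * x ^ k - (k : ℝ) * c * x ^ (k - 1)) /
        (x ^ k + 1) ^ 2) < 0 := by
  have hx : 0 < x := hc.trans_le hcx
  have hnum : 0 < x ^ (2 * k) + ((k : ℝ) + 1) * x ^ k - (k : ℝ) * c * x ^ (k - 1) := by
    have hle := natCast_mul_mul_pow_sub_one_le k hc.le hcx
    have : 0 < x ^ (2 * k) + x ^ k := by positivity
    linarith
  exact ⟨hasDerivAt_sub_add_div_one_add_pow b c k (by positivity),
    neg_neg_of_pos (by positivity)⟩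

theorem stmt_10_general (k : ℕ) (a θ : ℝ) (ha : 0 < a) (hθ0 : 0 < θ) :
    (∀ x ∈ Set.Icc (a * θ) a,
      HasDerivAt (fun u : ℝ => a * (1 + θ) - u + (u - a * θ) / (1 + u ^ k))
        (-((x ^ (2 * k) + ((k : ℝ) + 1) * x ^ k - (k : ℝ) * a * θ * x ^ (k - 1)) /
          (x ^ k + 1) ^ 2)) x ∧
      -((x ^ (2 * k) + ((k : ℝ) + 1) * x ^ k - (k : ℝ) * a * θ * x ^ (k - 1)) /
          (x ^ k + 1) ^ 2) < 0) ∧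
    StrictAntiOn (fun u : ℝ => a * (1 + θ) - u + (u - a * θ) / (1 + u ^ k))
      (Set.Icc (a * θ) a) := by
  rw [mul_assoc (k : ℝ) a θ]
  have hγ := fun x (hx : x ∈ Icc (a * θ) a) =>
    hasDerivAt_sub_add_div_one_add_pow_and_neg (a * (1 + θ)) k (mul_pos ha hθ0) hx.1
  exact ⟨hγ, strictAntiOn_of_hasDerivAt_neg (convex_Icc _ _)
    (fun x hx => (hγ x hx).1) fun x hx => (hγ x hx).2⟩

/-- For every `x ∈ [aθ, a]`, the map `γ(u) = a(1+θ) − u + (u − aθ)/(1 + u^k)` has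
derivative `−(x^{2k} + (k+1)x^k − kaθx^{k−1})/(x^k + 1)²`, which is negative;
in particular `γ` is strictly decreasing on `[aθ, a]`. -/
theorem stmt_10 (k : ℕ) (hk : 2 ≤ k) (a θ : ℝ) (ha : 0 < a) (hθ0 : 0 < θ) (hθ1 : θ < 1) :
    (∀ x ∈ Set.Icc (a * θ) a,
      HasDerivAt (fun u : ℝ => a * (1 + θ) - u + (u - a * θ) / (1 + u ^ k))
        (-((x ^ (2 * k) + ((k : ℝ) + 1) * x ^ k - (k : ℝ) * a * θ * x ^ (k - 1)) /
          (x ^ k + 1) ^ 2)) x ∧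
      -((x ^ (2 * k) + ((k : ℝ) + 1) * x ^ k - (k : ℝ) * a * θ * x ^ (k - 1)) /
          (x ^ k + 1) ^ 2) < 0) ∧
    StrictAntiOn (fun u : ℝ => a * (1 + θ) - u + (u - a * θ) / (1 + u ^ k))
      (Set.Icc (a * θ) a) :=
  stmt_10_general k a θ ha hθ0
end

section
/- The map γ sends the interval [aθ, a] into itself (indeed γ(aθ) = a and aθ < γ(a) < a), and the equation γ(x) = x has exactly one solution ξ in [aθ, a]; moreover ξ lies in the open interval (aθ, a) and satisfies ξ = a(1 + (1+θ)ξ^k)/(1 + 2ξ^k). -/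
/-!
Clearing the denominator `1 + u ^ k`, `γ(u) = u` becomes `u = a · w(u ^ k)` with
`w(t) = (1 + (1 + θ) t) / (1 + 2 t)`. Since `1 + θ < 2`, `w` decreases on `t ≥ 0` from `1` towards
`(1 + θ) / 2 > θ`, so `u ↦ a · w(u ^ k)` is antitone with values in `(aθ, a)` on `u > 0`. It therefore
meets the diagonal exactly once, by the intermediate value theorem on `[aθ, a]`, and inside `(aθ, a)`.
-/

namespace WidomRowlinson

noncomputable def gamma (a θ : ℝ) (k : ℕ) (u : ℝ) : ℝ :=
  a * (1 + θ) - u + (u - a * θ) / (1 + u ^ k)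

noncomputable def weight (θ t : ℝ) : ℝ := (1 + (1 + θ) * t) / (1 + 2 * t)

variable {a θ : ℝ} {k : ℕ}

theorem gamma_mul_self (a θ : ℝ) (k : ℕ) : gamma a θ k (a * θ) = a := by
  rw [gamma, sub_self, zero_div]; ring

theorem mul_lt_gamma_self (ha : 0 < a) (hθ : θ < 1) : a * θ < gamma a θ k a := by
  have : 0 < (a - a * θ) / (1 + a ^ k) := div_pos (by nlinarith) (by positivity)
  rw [gamma]; linarith

theorem gamma_self_lt (ha : 0 < a) (hθ : θ < 1) : gamma a θ k a < a := by
  have : (a - a * θ) / (1 + a ^ k) < a - a * θ :=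
    div_lt_self (by nlinarith) (lt_add_of_pos_right 1 (pow_pos ha k))
  rw [gamma]; linarith

theorem mapsTo_gamma_Icc (ha : 0 ≤ a) (hθ : 0 ≤ θ) :
    Set.MapsTo (gamma a θ k) (Set.Icc (a * θ) a) (Set.Icc (a * θ) a) := by
  rintro u ⟨hθu, hua⟩
  have hu : 0 ≤ u := (mul_nonneg ha hθ).trans hθu
  have hpos : 0 ≤ (u - a * θ) / (1 + u ^ k) := div_nonneg (by linarith) (by positivity)
  have hle : (u - a * θ) / (1 + u ^ k) ≤ u - a * θ :=
    div_le_self (by linarith) (le_add_of_nonneg_right (by positivity))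
  constructor <;> rw [gamma] <;> linarith

theorem gamma_eq_self_iff {u : ℝ} (hu : 0 ≤ u) :
    gamma a θ k u = u ↔ u = a * weight θ (u ^ k) := by
  have h1 : 0 < 1 + u ^ k := by positivity
  have h2 : 0 < 1 + 2 * u ^ k := by positivity
  rw [gamma, weight, mul_div_assoc', eq_div_iff h2.ne', ← sub_eq_zero, ← sub_eq_zero (a := u * _)]
  rw [show a * (1 + θ) - u + (u - a * θ) / (1 + u ^ k) - u
      = -(u * (1 + 2 * u ^ k) - a * (1 + (1 + θ) * u ^ k)) / (1 + u ^ k) by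
    field_simp; ring]
  rw [div_eq_zero_iff, neg_eq_zero, or_iff_left h1.ne']

theorem weight_lt_one {t : ℝ} (hθ : θ < 1) (ht : 0 < t) : weight θ t < 1 := by
  rw [weight, div_lt_one (by positivity)]; nlinarith

theorem lt_weight {t : ℝ} (hθ : θ < 1) (ht : 0 ≤ t) : θ < weight θ t := by
  rw [weight, lt_div_iff₀ (by positivity)]; nlinarith

theorem weight_antitoneOn (hθ : θ ≤ 1) : AntitoneOn (weight θ) (Set.Ici 0) := by
  intro s (hs : 0 ≤ s) t (ht : 0 ≤ t) hst
  rw [weight, weight, div_le_div_iff₀ (by positivity) (by positivity)]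
  nlinarith

theorem continuousOn_sub_mul_weight_pow (a θ : ℝ) (k : ℕ) :
    ContinuousOn (fun u : ℝ => u - a * weight θ (u ^ k)) (Set.Ici 0) := by
  unfold weight
  fun_prop (disch := exact fun u (hu : 0 ≤ u) => by positivity)

theorem exists_eq_mul_weight_pow (ha : 0 < a) (hθ0 : 0 < θ) (hθ1 : θ < 1) :
    ∃ ξ ∈ Set.Icc (a * θ) a, ξ = a * weight θ (ξ ^ k) := by
  have haθ : 0 < a * θ := mul_pos ha hθ0
  have hleft : a * θ - a * weight θ ((a * θ) ^ k) ≤ 0 := by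
    nlinarith [lt_weight (t := (a * θ) ^ k) hθ1 (by positivity)]
  have hright : 0 ≤ a - a * weight θ (a ^ k) := by
    nlinarith [weight_lt_one (t := a ^ k) hθ1 (by positivity)]
  have hcont := (continuousOn_sub_mul_weight_pow a θ k).mono
    fun u (hu : u ∈ Set.Icc (a * θ) a) => haθ.le.trans hu.1
  obtain ⟨ξ, hξ, hzero⟩ :=
    intermediate_value_Icc (mul_le_of_le_one_right ha.le hθ1.le) hcont ⟨hleft, hright⟩
  exact ⟨ξ, hξ, sub_eq_zero.1 hzero⟩

theorem mem_Ioo_of_eq_mul_weight_pow {u : ℝ} (ha : 0 < a) (hθ : θ < 1) (hu : 0 < u)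
    (h : u = a * weight θ (u ^ k)) : u ∈ Set.Ioo (a * θ) a := by
  have hlt := lt_weight (t := u ^ k) hθ (by positivity)
  have hgt := weight_lt_one (t := u ^ k) hθ (by positivity)
  constructor <;> rw [h] <;> nlinarith

theorem eq_of_eq_mul_weight_pow {x y : ℝ} (ha : 0 ≤ a) (hθ : θ ≤ 1) (hx : 0 ≤ x) (hy : 0 ≤ y)
    (hxw : x = a * weight θ (x ^ k)) (hyw : y = a * weight θ (y ^ k)) : x = y := by
  wlog hxy : x ≤ y generalizing x y
  · exact (this hy hx hyw hxw (le_of_not_ge hxy)).symm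
  refine le_antisymm hxy ?_
  have hw : weight θ (y ^ k) ≤ weight θ (x ^ k) :=
    weight_antitoneOn hθ (Set.mem_Ici.2 (by positivity)) (Set.mem_Ici.2 (by positivity))
      (pow_le_pow_left₀ hx hxy k)
  rw [hxw, hyw]
  exact mul_le_mul_of_nonneg_left hw ha

end WidomRowlinson

open WidomRowlinson in
theorem stmt_11_general (k : ℕ) (a θ : ℝ) (ha : 0 < a) (hθ0 : 0 < θ) (hθ1 : θ < 1) :
    Set.MapsTo (fun u : ℝ => a * (1 + θ) - u + (u - a * θ) / (1 + u ^ k))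
      (Set.Icc (a * θ) a) (Set.Icc (a * θ) a) ∧
    (a * (1 + θ) - a * θ + (a * θ - a * θ) / (1 + (a * θ) ^ k)) = a ∧
    a * θ < (a * (1 + θ) - a + (a - a * θ) / (1 + a ^ k)) ∧
    (a * (1 + θ) - a + (a - a * θ) / (1 + a ^ k)) < a ∧
    ∃ ξ : ℝ, ξ ∈ Set.Ioo (a * θ) a ∧
      (a * (1 + θ) - ξ + (ξ - a * θ) / (1 + ξ ^ k)) = ξ ∧
      ξ = a * (1 + (1 + θ) * ξ ^ k) / (1 + 2 * ξ ^ k) ∧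
      ∀ x ∈ Set.Icc (a * θ) a,
        (a * (1 + θ) - x + (x - a * θ) / (1 + x ^ k)) = x → x = ξ := by
  have haθ : 0 < a * θ := mul_pos ha hθ0
  obtain ⟨ξ, hξIcc, hξ⟩ := exists_eq_mul_weight_pow (k := k) ha hθ0 hθ1
  have hξpos : 0 < ξ := haθ.trans_le hξIcc.1
  refine ⟨mapsTo_gamma_Icc ha.le hθ0.le, gamma_mul_self a θ k, mul_lt_gamma_self ha hθ1,
    gamma_self_lt ha hθ1, ξ, mem_Ioo_of_eq_mul_weight_pow ha hθ1 hξpos hξ,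
    (gamma_eq_self_iff hξpos.le).2 hξ, by rwa [mul_div_assoc], fun x hx hfix => ?_⟩
  have hx : 0 ≤ x := haθ.le.trans hx.1
  exact eq_of_eq_mul_weight_pow ha.le hθ1.le hx hξpos.le ((gamma_eq_self_iff hx).1 hfix) hξ

/-- `γ` maps `[aθ, a]` into itself (with `γ(aθ) = a` and `aθ < γ(a) < a`), and `γ` has a
unique fixed point `ξ` in `[aθ, a]`; moreover `ξ ∈ (aθ, a)` and
`ξ = a(1 + (1+θ)ξ^k)/(1 + 2ξ^k)`. -/
theorem stmt_11 (k : ℕ) (hk : 2 ≤ k) (a θ : ℝ) (ha : 0 < a) (hθ0 : 0 < θ) (hθ1 : θ < 1) :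
    Set.MapsTo (fun u : ℝ => a * (1 + θ) - u + (u - a * θ) / (1 + u ^ k))
      (Set.Icc (a * θ) a) (Set.Icc (a * θ) a) ∧
    (a * (1 + θ) - a * θ + (a * θ - a * θ) / (1 + (a * θ) ^ k)) = a ∧
    a * θ < (a * (1 + θ) - a + (a - a * θ) / (1 + a ^ k)) ∧
    (a * (1 + θ) - a + (a - a * θ) / (1 + a ^ k)) < a ∧
    ∃ ξ : ℝ, ξ ∈ Set.Ioo (a * θ) a ∧
      (a * (1 + θ) - ξ + (ξ - a * θ) / (1 + ξ ^ k)) = ξ ∧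
      ξ = a * (1 + (1 + θ) * ξ ^ k) / (1 + 2 * ξ ^ k) ∧
      ∀ x ∈ Set.Icc (a * θ) a,
        (a * (1 + θ) - x + (x - a * θ) / (1 + x ^ k)) = x → x = ξ :=
  stmt_11_general k a θ ha hθ0 hθ1
end

section
/- Let k ≥ 4 and 0 < θ < 1 (ferromagnetic case). If θ < (k−1)/(k+1) and λ > (1/(k−1−θ(k+1)))·((k+1)/k)^k, then the fixed-point system (★) has at least three positive solutions: one of the form (ξ^k, ξ^k) on the diagonal and two off-diagonal solutions (x₀, y₀) and (y₀, x₀) with x₀ ≠ y₀. -/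
/-!
Off the diagonal write `y = t^k x` with `t > 1`. The quotient of the two equations of (★) gives
`t (1 + x + θ y) = 1 + θ x + y`, that is `x = 1 / R(t)` for the polynomial `R = branchPoly`
with `(t - 1) R(t) = θ + t^k - t - θ t^(k+1)`. It has `R(1) = k - 1 - θ (k + 1) > 0` and a
first zero `t* > 1`. The first equation of (★) then reads `G(t) = 0` for
`G = branchEq = (R + 1 + t^k)^k - λ R (R + 1 + θ t^k)^k`. The bound on `λ` is exactly
`G(1) < 0`, while `G(t*) = (1 + t*^k)^k > 0`, so `G` vanishes at some `t ∈ (1, t*)`, where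
`R(t) > 0`. The diagonal solution comes from the intermediate value theorem on `[0, λ]`.
-/

open Set Finset

theorem exists_mem_Ioc_eq_zero_forall_pos {g : ℝ → ℝ} {a b : ℝ} (hab : a ≤ b)
    (hg : ContinuousOn g (Icc a b)) (hga : 0 < g a) (hgb : g b ≤ 0) :
    ∃ s ∈ Ioc a b, g s = 0 ∧ ∀ t ∈ Ico a s, 0 < g t := by
  set S := Icc a b ∩ g ⁻¹' Iic 0
  have hS : IsClosed S := hg.preimage_isClosed_of_isClosed isClosed_Icc isClosed_Iic
  have hSb : BddBelow S := ⟨a, fun t ht => ht.1.1⟩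
  have hsS : sInf S ∈ S := hS.csInf_mem ⟨b, ⟨hab, le_rfl⟩, hgb⟩ hSb
  have hpos : ∀ t ∈ Ico a (sInf S), 0 < g t := fun t ht => by
    by_contra! hgt
    exact (csInf_le hSb ⟨⟨ht.1, ht.2.le.trans hsS.1.2⟩, hgt⟩).not_gt ht.2
  have has : a < sInf S := lt_of_le_of_ne hsS.1.1 fun h => (h ▸ hsS.2 : g a ≤ 0).not_gt hga
  obtain ⟨s, hs, hgs⟩ := intermediate_value_Icc' hsS.1.1
    (hg.mono (Icc_subset_Icc_right hsS.1.2)) ⟨hsS.2, hga.le⟩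
  have hs_eq : s = sInf S := le_antisymm hs.2 (csInf_le hSb
    ⟨⟨hs.1, hs.2.trans hsS.1.2⟩, by simp [hgs]⟩)
  exact ⟨sInf S, ⟨has, hsS.1.2⟩, hs_eq ▸ hgs, hpos⟩

theorem exists_mem_Ioo_eq_zero_and_pos {f g : ℝ → ℝ} {a b : ℝ} (hab : a ≤ b)
    (hf : ContinuousOn f (Icc a b)) (hg : ContinuousOn g (Icc a b))
    (hfa : f a < 0) (hga : 0 < g a) (hgb : g b ≤ 0)
    (hfg : ∀ t ∈ Icc a b, g t = 0 → 0 < f t) :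
    ∃ t ∈ Ioo a b, f t = 0 ∧ 0 < g t := by
  obtain ⟨s, hs, hgs, hpos⟩ := exists_mem_Ioc_eq_zero_forall_pos hab hg hga hgb
  have hfs : 0 < f s := hfg s ⟨hs.1.le, hs.2⟩ hgs
  obtain ⟨t, ht, hft⟩ := intermediate_value_Icc hs.1.le
    (hf.mono (Icc_subset_Icc_right hs.2)) ⟨hfa.le, hfs.le⟩
  have hat : a < t := lt_of_le_of_ne ht.1 fun h => (h ▸ hfa).ne hft
  have hts : t < s := lt_of_le_of_ne ht.2 fun h => (h ▸ hfs).ne' hft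
  exact ⟨t, ⟨hat, hts.trans_le hs.2⟩, hft, hpos t ⟨ht.1, hts⟩⟩

theorem exists_pos_eq_diagonal (k : ℕ) {lam θ : ℝ} (hlam : 0 < lam) (hθ0 : 0 ≤ θ)
    (hθ1 : θ ≤ 1) :
    ∃ s, 0 < s ∧ s = lam * ((1 + s + θ * s) / (1 + s + s)) ^ k := by
  set f : ℝ → ℝ := fun s => lam * ((1 + s + θ * s) / (1 + s + s)) ^ k - s
  have hf : ContinuousOn f (Icc 0 lam) := by
    refine ContinuousOn.sub (continuousOn_const.mul (ContinuousOn.pow ?_ k)) continuousOn_id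
    exact (by fun_prop : Continuous fun s : ℝ => 1 + s + θ * s).continuousOn.div
      (by fun_prop) fun s hs => by linarith [hs.1]
  have hf_lam : f lam ≤ 0 := by
    have hratio : (1 + lam + θ * lam) / (1 + lam + lam) ≤ 1 := by
      rw [div_le_one (by linarith)]
      nlinarith
    have := pow_le_one₀ (by positivity) hratio (n := k)
    simp only [f]
    nlinarith
  obtain ⟨s, hs, hfs⟩ := intermediate_value_Icc' hlam.le hf ⟨hf_lam, by simp [f, hlam.le]⟩
  have hs_eq : s = lam * ((1 + s + θ * s) / (1 + s + s)) ^ k := by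
    simp only [f] at hfs
    linarith
  have := hs.1
  exact ⟨s, by rw [hs_eq]; positivity, hs_eq⟩

def branchPoly (θ : ℝ) (k : ℕ) (t : ℝ) : ℝ :=
  t * ∑ i ∈ range (k - 1), t ^ i - θ * ∑ i ∈ range (k + 1), t ^ i

section

variable {θ : ℝ} {k : ℕ}

@[fun_prop]
theorem continuous_branchPoly (θ : ℝ) (k : ℕ) : Continuous (branchPoly θ k) := by
  unfold branchPoly
  fun_prop

theorem sub_one_mul_branchPoly (hk : k ≠ 0) (t : ℝ) :
    (t - 1) * branchPoly θ k t = θ + t ^ k - t - θ * t ^ (k + 1) := by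
  obtain ⟨m, rfl⟩ := Nat.exists_eq_add_one_of_ne_zero hk
  simp only [branchPoly, Nat.add_sub_cancel]
  linear_combination t * geom_sum_mul t m - θ * geom_sum_mul t (m + 2)

theorem branchPoly_one (hk : k ≠ 0) : branchPoly θ k 1 = k - 1 - θ * (k + 1) := by
  simp [branchPoly, Nat.cast_sub (Nat.one_le_iff_ne_zero.2 hk)]

theorem branchPoly_one_add_inv_neg (hk : k ≠ 0) (hθ : 0 < θ) :
    branchPoly θ k (1 + θ⁻¹) < 0 := by
  set T := 1 + θ⁻¹
  have hθT : θ * T = θ + 1 := by simp only [T, mul_add, mul_one, mul_inv_cancel₀ hθ.ne']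
  have hT : 1 ≤ T ^ k := one_le_pow₀ (by simp [T, hθ.le])
  have hP : (T - 1) * branchPoly θ k T < 0 := by
    rw [sub_one_mul_branchPoly hk, pow_succ, mul_comm _ T, ← mul_assoc, hθT]
    nlinarith [mul_le_mul_of_nonneg_left hT hθ.le, show 0 < T by positivity]
  exact neg_of_mul_neg_right hP (by simp [T, hθ.le])

def branchEq (lam θ : ℝ) (k : ℕ) (t : ℝ) : ℝ :=
  (branchPoly θ k t + 1 + t ^ k) ^ k -
    lam * branchPoly θ k t * (branchPoly θ k t + 1 + θ * t ^ k) ^ k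

theorem continuous_branchEq (lam θ : ℝ) (k : ℕ) : Continuous (branchEq lam θ k) := by
  unfold branchEq
  fun_prop

theorem branchEq_one_neg (hk : k ≠ 0) {lam : ℝ} (hθ1 : θ < 1)
    (hc : 0 < (k : ℝ) - 1 - θ * (k + 1))
    (hlamc : (1 / ((k : ℝ) - 1 - θ * ((k : ℝ) + 1))) * (((k : ℝ) + 1) / k) ^ k < lam) :
    branchEq lam θ k 1 < 0 := by
  rw [one_div, inv_mul_lt_iff₀ hc, div_pow, div_lt_iff₀ (by positivity)] at hlamc
  have e₁ : (k : ℝ) - 1 - θ * (k + 1) + 1 + 1 = (1 - θ) * (k + 1) := by ring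
  have e₂ : (k : ℝ) - 1 - θ * (k + 1) + 1 + θ = (1 - θ) * k := by ring
  rw [branchEq, branchPoly_one hk, one_pow, mul_one, e₁, e₂, mul_pow, mul_pow, sub_neg]
  calc (1 - θ) ^ k * ((k : ℝ) + 1) ^ k
      < (1 - θ) ^ k * (((k : ℝ) - 1 - θ * (k + 1)) * lam * k ^ k) :=
        mul_lt_mul_of_pos_left hlamc (pow_pos (by linarith) k)
    _ = _ := by ring

theorem branchEq_pos_of_branchPoly_eq_zero {lam t : ℝ} (ht : 0 ≤ t)
    (h : branchPoly θ k t = 0) : 0 < branchEq lam θ k t := by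
  simp only [branchEq, h, mul_zero, zero_mul, sub_zero, zero_add]
  positivity

theorem exists_branchEq_eq_zero (hk : k ≠ 0) {lam : ℝ} (hθ0 : 0 < θ) (hθ1 : θ < 1)
    (hc : 0 < (k : ℝ) - 1 - θ * (k + 1))
    (hlamc : (1 / ((k : ℝ) - 1 - θ * ((k : ℝ) + 1))) * (((k : ℝ) + 1) / k) ^ k < lam) :
    ∃ t, 1 < t ∧ 0 < branchPoly θ k t ∧ branchEq lam θ k t = 0 := by
  obtain ⟨t, ht, hG, hR⟩ := exists_mem_Ioo_eq_zero_and_pos (by simp [hθ0.le])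
    (continuous_branchEq lam θ k).continuousOn (continuous_branchPoly θ k).continuousOn
    (branchEq_one_neg hk hθ1 hc hlamc) (by rwa [branchPoly_one hk])
    (branchPoly_one_add_inv_neg hk hθ0).le
    fun t ht => branchEq_pos_of_branchPoly_eq_zero (zero_le_one.trans ht.1)
  exact ⟨t, ht.1, hR, hG⟩

theorem fixedPoint_of_branch {lam t r : ℝ} (k : ℕ) (ht : 0 < t) (hr : 0 < r)
    (hrt : (t - 1) * r = θ + t ^ k - t - θ * t ^ (k + 1))
    (hG : (r + 1 + t ^ k) ^ k = lam * r * (r + 1 + θ * t ^ k) ^ k) :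
    r⁻¹ = lam * ((1 + r⁻¹ + θ * (t ^ k * r⁻¹)) / (1 + r⁻¹ + t ^ k * r⁻¹)) ^ k ∧
      t ^ k * r⁻¹ = lam * ((1 + θ * r⁻¹ + t ^ k * r⁻¹) / (1 + r⁻¹ + t ^ k * r⁻¹)) ^ k := by
  set D := r + 1 + t ^ k
  set N := r + 1 + θ * t ^ k
  have hD : 0 < D := by positivity
  have hN : lam * N ^ k ≠ 0 := fun h => by
    have : 0 < D ^ k := by positivity
    rw [hG, mul_right_comm, h, zero_mul] at this
    exact this.false
  have e₁ : (1 + r⁻¹ + θ * (t ^ k * r⁻¹)) / (1 + r⁻¹ + t ^ k * r⁻¹) = N / D := by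
    field_simp
    ring
  have e₂ : (1 + θ * r⁻¹ + t ^ k * r⁻¹) / (1 + r⁻¹ + t ^ k * r⁻¹) = t * (N / D) := by
    have hnum : r + θ + t ^ k = t * N := by linear_combination -hrt
    rw [← mul_div_assoc, ← hnum]
    simp only [D]
    field_simp
  have key : lam * (N / D) ^ k = r⁻¹ := by
    rw [div_pow, hG]
    field_simp
    exact div_self hN
  refine ⟨by rw [e₁, key], by rw [e₂, mul_pow, mul_left_comm, key]⟩

end

/-- Ferromagnetic case, `k ≥ 4`: if `θ < (k−1)/(k+1)` and
`λ > (1/(k−1−θ(k+1)))·((k+1)/k)^k`, then (★) has at least three positive solutions: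
one diagonal solution `(ξ^k, ξ^k)` and two off-diagonal solutions `(x₀, y₀)`, `(y₀, x₀)`. -/
theorem stmt_13 (k : ℕ) (hk : 4 ≤ k) (lam θ : ℝ) (hlam : 0 < lam)
    (hθ0 : 0 < θ) (hθ1 : θ < 1)
    (hθc : θ < ((k : ℝ) - 1) / ((k : ℝ) + 1))
    (hlamc : (1 / ((k : ℝ) - 1 - θ * ((k : ℝ) + 1))) * (((k : ℝ) + 1) / k) ^ k < lam) :
    ∃ ξ x₀ y₀ : ℝ, 0 < ξ ∧ 0 < x₀ ∧ 0 < y₀ ∧ x₀ ≠ y₀ ∧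
      (ξ ^ k = lam * ((1 + ξ ^ k + θ * ξ ^ k) / (1 + ξ ^ k + ξ ^ k)) ^ k) ∧
      (x₀ = lam * ((1 + x₀ + θ * y₀) / (1 + x₀ + y₀)) ^ k ∧
        y₀ = lam * ((1 + θ * x₀ + y₀) / (1 + x₀ + y₀)) ^ k) ∧
      (y₀ = lam * ((1 + y₀ + θ * x₀) / (1 + y₀ + x₀)) ^ k ∧
        x₀ = lam * ((1 + θ * y₀ + x₀) / (1 + y₀ + x₀)) ^ k) := by
  have hk0 : k ≠ 0 := by omega
  have hc : 0 < (k : ℝ) - 1 - θ * (k + 1) := by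
    have := (lt_div_iff₀ (by positivity)).1 hθc
    linarith
  obtain ⟨s, hs, hs_eq⟩ := exists_pos_eq_diagonal k hlam hθ0.le hθ1.le
  obtain ⟨t, ht, hr, hG⟩ := exists_branchEq_eq_zero hk0 hθ0 hθ1 hc hlamc
  obtain ⟨hx, hy⟩ := fixedPoint_of_branch k (by linarith) hr (sub_one_mul_branchPoly hk0 t)
    (sub_eq_zero.1 hG)
  set r := branchPoly θ k t
  have htk : 1 < t ^ k := one_lt_pow₀ ht hk0
  refine ⟨s ^ (k : ℝ)⁻¹, r⁻¹, t ^ k * r⁻¹, by positivity, by positivity, by positivity,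
    fun h => by nlinarith [inv_pos.2 hr], by rwa [Real.rpow_inv_natCast_pow hs.le hk0],
    ⟨hx, hy⟩, ?_, ?_⟩
  · rwa [add_right_comm (1 : ℝ) (t ^ k * r⁻¹), add_right_comm (1 : ℝ) (t ^ k * r⁻¹) r⁻¹]
  · rwa [add_right_comm (1 : ℝ) (θ * (t ^ k * r⁻¹)), add_right_comm (1 : ℝ) (t ^ k * r⁻¹)]
end

section
/- Let k ≥ 4 and 0 < θ < 1 (ferromagnetic case). If either θ ≥ (k−1)/k, or θ < (k−1)/k and λ < 1/(k−1−kθ), then the fixed-point system (★) has exactly one positive solution. -/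
/-!
Write `s = 1 + x + y`, `a = 1 + x + θ y`, `b = 1 + θ x + y`, so that (★) reads `x = λ (a/s)^k`,
`y = λ (b/s)^k`. Bernoulli's inequality for `(b/a)^k` gives `a (x - y) ≤ k x (a - b) =
k (1 - θ) x (x - y)`. On the other hand `x ≤ λ`, and either hypothesis on `θ, λ` implies
`λ (k (1 - θ) - 1) < 1`, whence `k (1 - θ) x < 1 + x ≤ a`; so no solution has `x > y`, and by
symmetry every solution is diagonal. On the diagonal `t ↦ λ ((1 + (1 + θ) t)/(1 + 2t))^k` is
antitone, so it has at most one fixed point, and one exists by the intermediate value theorem.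
-/

open Set

lemma pow_mul_add_natCast_mul_sub_le {a b : ℝ} (ha : 0 < a) (hb : 0 ≤ b) (k : ℕ) :
    a ^ k * (a + k * (b - a)) ≤ a * b ^ k := by
  have hB := one_add_mul_sub_le_pow (a := b / a) (by linarith [div_nonneg hb ha.le]) k
  calc a ^ k * (a + k * (b - a)) = a ^ (k + 1) * (1 + k * (b / a - 1)) := by
        field_simp; ring
    _ ≤ a ^ (k + 1) * (b / a) ^ k := by gcongr
    _ = a * (a * (b / a)) ^ k := by ring
    _ = a * b ^ k := by rw [mul_div_cancel₀ b ha.ne']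

theorem AntitoneOn.eq_of_isFixedPt {α : Type*} [LinearOrder α] {f : α → α} {s : Set α}
    (hf : AntitoneOn f s) {x y : α} (hx : x ∈ s) (hy : y ∈ s)
    (hfx : f x = x) (hfy : f y = y) : x = y := by
  rcases le_total x y with hxy | hxy
  · exact hxy.antisymm (hfy ▸ hfx ▸ hf hx hy hxy)
  · exact (hfx ▸ hfy ▸ hf hy hx hxy).antisymm hxy

namespace SoftCoreWidomRowlinson

noncomputable def wrMap (k : ℕ) (lam θ x y : ℝ) : ℝ :=
  lam * ((1 + x + θ * y) / (1 + x + y)) ^ k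

variable {k : ℕ} {lam θ x y : ℝ}

lemma wrMap_swap : wrMap k lam θ y x = lam * ((1 + θ * x + y) / (1 + x + y)) ^ k := by
  unfold wrMap
  congr 3 <;> ring

lemma wrMap_le (hlam : 0 ≤ lam) (hθ0 : 0 ≤ θ) (hθ1 : θ ≤ 1) (hx : 0 ≤ x) (hy : 0 ≤ y) :
    wrMap k lam θ x y ≤ lam := by
  have hs : 0 < 1 + x + y := by linarith
  have hratio : (1 + x + θ * y) / (1 + x + y) ≤ 1 := by
    rw [div_le_one hs]; nlinarith
  exact mul_le_of_le_one_right hlam (pow_le_one₀ (by positivity) hratio)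

lemma lam_mul_lt_one (hlam : 0 ≤ lam)
    (hcond : ((k : ℝ) - 1) / k ≤ θ ∨
      (θ < ((k : ℝ) - 1) / k ∧ lam < 1 / ((k : ℝ) - 1 - k * θ))) :
    lam * (k * (1 - θ) - 1) < 1 := by
  rcases le_or_gt (k * (1 - θ) - 1 : ℝ) 0 with hc | hc
  · nlinarith
  rcases hcond with hθ | ⟨-, hlam'⟩
  · have hk : (0 : ℝ) < k := by
      rcases Nat.eq_zero_or_pos k with rfl | hk
      · norm_num at hc
      · exact_mod_cast hk
    rw [div_le_iff₀ hk] at hθ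
    linarith
  · rw [lt_div_iff₀ (by linarith)] at hlam'
    linarith

lemma le_of_isFixedPt (hlam : 0 ≤ lam) (hθ0 : 0 ≤ θ) (hθ1 : θ ≤ 1)
    (hcond : lam * (k * (1 - θ) - 1) < 1) (hx : 0 ≤ x) (hy : 0 ≤ y)
    (hfx : wrMap k lam θ x y = x) (hfy : wrMap k lam θ y x = y) : x ≤ y := by
  by_contra! hyx
  rw [wrMap_swap] at hfy
  unfold wrMap at hfx
  set s := 1 + x + y
  set a := 1 + x + θ * y
  set b := 1 + θ * x + y
  have ha : 0 < a := by positivity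
  have hb : 0 < b := by positivity
  have hxa : k * (1 - θ) * x < a := by
    have hxlam : x ≤ lam := hfx ▸ wrMap_le hlam hθ0 hθ1 hx hy
    have : (k * (1 - θ) - 1) * x < 1 := by
      rcases le_or_gt (k * (1 - θ) - 1 : ℝ) 0 with hc | hc <;> nlinarith
    nlinarith
  have hbern : x * (a + k * (b - a)) ≤ a * y := by
    rw [← hfx, ← hfy, div_pow, div_pow]
    calc lam * (a ^ k / s ^ k) * (a + k * (b - a))
        = lam / s ^ k * (a ^ k * (a + k * (b - a))) := by ring
      _ ≤ lam / s ^ k * (a * b ^ k) :=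
        mul_le_mul_of_nonneg_left (pow_mul_add_natCast_mul_sub_le ha hb.le k) (by positivity)
      _ = a * (lam * (b ^ k / s ^ k)) := by ring
  have hab : k * x * (a - b) = k * (1 - θ) * x * (x - y) := by
    simp only [a, b]; ring
  nlinarith [mul_lt_mul_of_pos_right hxa (sub_pos.2 hyx)]

lemma wrMap_diag_antitoneOn (hlam : 0 ≤ lam) (hθ0 : 0 ≤ θ) (hθ1 : θ ≤ 1) :
    AntitoneOn (fun t => wrMap k lam θ t t) (Ici 0) := by
  intro x (hx : 0 ≤ x) z (hz : 0 ≤ z) hxz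
  have hratio : (1 + z + θ * z) / (1 + z + z) ≤ (1 + x + θ * x) / (1 + x + x) := by
    rw [div_le_div_iff₀ (by positivity) (by positivity)]
    nlinarith [mul_nonneg (sub_nonneg.2 hθ1) (sub_nonneg.2 hxz)]
  dsimp only [wrMap]
  gcongr

lemma exists_pos_wrMap_diag_eq (hlam : 0 < lam) (hθ0 : 0 ≤ θ) (hθ1 : θ ≤ 1) :
    ∃ c, 0 < c ∧ wrMap k lam θ c c = c := by
  have hcont : ContinuousOn (fun t => t - wrMap k lam θ t t) (Icc 0 lam) := by
    have hden : ∀ t ∈ Icc 0 lam, 1 + t + t ≠ 0 := fun t ht => by linarith [ht.1]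
    unfold wrMap
    fun_prop (disch := assumption)
  have hmem : (0 : ℝ) ∈ Icc (0 - wrMap k lam θ 0 0) (lam - wrMap k lam θ lam lam) := by
    refine ⟨?_, sub_nonneg.2 (wrMap_le hlam.le hθ0 hθ1 hlam.le hlam.le)⟩
    simp [wrMap, hlam.le]
  obtain ⟨c, ⟨hc0, -⟩, hc⟩ := intermediate_value_Icc hlam.le hcont hmem
  refine ⟨c, hc0.lt_of_ne ?_, (sub_eq_zero.1 hc).symm⟩
  rintro rfl
  simp [wrMap, hlam.ne'] at hc

end SoftCoreWidomRowlinson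

open SoftCoreWidomRowlinson

theorem stmt_14_general (k : ℕ) (lam θ : ℝ) (hlam : 0 < lam)
    (hθ0 : 0 < θ) (hθ1 : θ < 1)
    (hcond : ((k : ℝ) - 1) / k ≤ θ ∨
      (θ < ((k : ℝ) - 1) / k ∧ lam < 1 / ((k : ℝ) - 1 - k * θ))) :
    {p : ℝ × ℝ | 0 < p.1 ∧ 0 < p.2 ∧
      p.1 = lam * ((1 + p.1 + θ * p.2) / (1 + p.1 + p.2)) ^ k ∧
      p.2 = lam * ((1 + θ * p.1 + p.2) / (1 + p.1 + p.2)) ^ k}.encard = 1 := by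
  have hlamθ := lam_mul_lt_one hlam.le hcond
  obtain ⟨c, hc0, hc⟩ := exists_pos_wrMap_diag_eq (k := k) hlam hθ0.le hθ1.le
  rw [Set.encard_eq_one]
  refine ⟨(c, c), Set.ext fun ⟨x, y⟩ => ⟨fun ⟨hx, hy, hfx, hfy⟩ => ?_, ?_⟩⟩
  · change x = wrMap k lam θ x y at hfx
    rw [← wrMap_swap] at hfy
    obtain rfl : x = y :=
      (le_of_isFixedPt hlam.le hθ0.le hθ1.le hlamθ hx.le hy.le hfx.symm hfy.symm).antisymm
        (le_of_isFixedPt hlam.le hθ0.le hθ1.le hlamθ hy.le hx.le hfy.symm hfx.symm)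
    obtain rfl : x = c := (wrMap_diag_antitoneOn hlam.le hθ0.le hθ1.le).eq_of_isFixedPt
      hx.le hc0.le hfx.symm hc
    rfl
  · rintro ⟨⟩
    refine ⟨hc0, hc0, hc.symm, ?_⟩
    rw [← wrMap_swap]
    exact hc.symm

/-- Ferromagnetic case, `k ≥ 4`: if `θ ≥ (k−1)/k`, or `θ < (k−1)/k` and
`λ < 1/(k−1−kθ)`, then (★) has exactly one positive solution. -/
theorem stmt_14 (k : ℕ) (hk : 4 ≤ k) (lam θ : ℝ) (hlam : 0 < lam)
    (hθ0 : 0 < θ) (hθ1 : θ < 1)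
    (hcond : ((k : ℝ) - 1) / k ≤ θ ∨
      (θ < ((k : ℝ) - 1) / k ∧ lam < 1 / ((k : ℝ) - 1 - k * θ))) :
    {p : ℝ × ℝ | 0 < p.1 ∧ 0 < p.2 ∧
      p.1 = lam * ((1 + p.1 + θ * p.2) / (1 + p.1 + p.2)) ^ k ∧
      p.2 = lam * ((1 + θ * p.1 + p.2) / (1 + p.1 + p.2)) ^ k}.encard = 1 :=
  stmt_14_general k lam θ hlam hθ0 hθ1 hcond
end

section
/- Let 0 < θ < 1 and λ > 0, and let (z1, z2) be a positive tree solution of the Widom–Rowlinson recursion. Then there exists a positive solution (z1⁻, z1⁺, z2⁻, z2⁺) of the boundary system (◇) such that for every vertex i ∈ V and every j ∈ {1, 2}: zj⁻ ≤ zj(i) ≤ zj⁺. -/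
/-!
Both coordinates of a tree solution lie in `[λθ^k, λ]`, because `θ ≤ F ≤ 1`. Since `F(x, y)`
increases in `x` and decreases in `y`, a bracket `[a, b]` containing all `z1(i), z2(i)` is
mapped to the bracket `[λF(a, b)^k, λF(b, a)^k]`, which again contains them all. Iterating this
map from `[λθ^k, λ]` gives nested intervals whose endpoints converge to `A ≤ B` with
`A = λF(A, B)^k` and `B = λF(B, A)^k`, so `z1⁻ = z2⁻ = A`, `z1⁺ = z2⁺ = B` works.
-/

open Set Filter Topology Finset Function

namespace WidomRowlinson

noncomputable def F (θ x y : ℝ) : ℝ := (1 + x + θ * y) / (1 + x + y)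

section Monotonicity

variable {θ x y : ℝ}

lemma le_F (hθ : θ ≤ 1) (hx : 0 ≤ x) (hy : 0 ≤ y) : θ ≤ F θ x y := by
  rw [F, le_div_iff₀ (by positivity)]
  nlinarith

lemma F_le_one (hθ : θ ≤ 1) (hx : 0 ≤ x) (hy : 0 ≤ y) : F θ x y ≤ 1 := by
  rw [F, div_le_one (by positivity)]
  nlinarith

lemma F_mem_Icc_theta_one (hθ : θ ≤ 1) (hx : 0 ≤ x) (hy : 0 ≤ y) : F θ x y ∈ Icc θ 1 :=
  ⟨le_F hθ hx hy, F_le_one hθ hx hy⟩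

lemma F_le_F {x' y' : ℝ} (hθ : θ ≤ 1) (hx : 0 ≤ x) (hy' : 0 ≤ y') (hxx : x ≤ x')
    (hyy : y' ≤ y) : F θ x y ≤ F θ x' y' := by
  have hx' : 0 ≤ x' := hx.trans hxx
  have hy : 0 ≤ y := hy'.trans hyy
  rw [F, F, div_le_div_iff₀ (by positivity) (by positivity)]
  nlinarith [mul_nonneg (sub_nonneg.2 hxx) (sub_nonneg.2 hyy),
    mul_nonneg (sub_nonneg.2 hxx) hy', mul_nonneg hx (sub_nonneg.2 hyy)]

lemma F_mem_Icc {a b : ℝ} (hθ : θ ≤ 1) (ha : 0 ≤ a) (hx : x ∈ Icc a b) (hy : y ∈ Icc a b) :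
    F θ x y ∈ Icc (F θ a b) (F θ b a) :=
  ⟨F_le_F hθ ha (ha.trans hy.1) hx.1 hy.2, F_le_F hθ (ha.trans hx.1) ha hx.2 hy.1⟩

end Monotonicity

section Bounds

variable {lam c d : ℝ}

lemma mul_pow_mem_Icc {t : ℝ} (hlam : 0 ≤ lam) (hc : 0 ≤ c) (ht : t ∈ Icc c d) (k : ℕ) :
    lam * t ^ k ∈ Icc (lam * c ^ k) (lam * d ^ k) :=
  ⟨mul_le_mul_of_nonneg_left (pow_le_pow_left₀ hc ht.1 k) hlam,
    mul_le_mul_of_nonneg_left (pow_le_pow_left₀ (hc.trans ht.1) ht.2 k) hlam⟩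

lemma mul_prod_mem_Icc {ι : Type*} {s : Finset ι} {g : ι → ℝ} (hlam : 0 ≤ lam) (hc : 0 ≤ c)
    (hg : ∀ j ∈ s, g j ∈ Icc c d) :
    lam * ∏ j ∈ s, g j ∈ Icc (lam * c ^ #s) (lam * d ^ #s) := by
  rw [← prod_const, ← prod_const]
  exact ⟨mul_le_mul_of_nonneg_left (prod_le_prod (fun _ _ => hc) fun j hj => (hg j hj).1) hlam,
    mul_le_mul_of_nonneg_left
      (prod_le_prod (fun j hj => hc.trans (hg j hj).1) fun j hj => (hg j hj).2) hlam⟩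

lemma mem_Icc_of_tendsto {ι : Type*} {l : Filter ι} [l.NeBot] {u : ι → ℝ × ℝ} {p : ℝ × ℝ}
    {x : ℝ} (h : Tendsto u l (𝓝 p)) (hx : ∀ n, x ∈ Icc (u n).1 (u n).2) : x ∈ Icc p.1 p.2 :=
  ⟨le_of_tendsto' (continuous_fst.tendsto p |>.comp h) fun n => (hx n).1,
    ge_of_tendsto' (continuous_snd.tendsto p |>.comp h) fun n => (hx n).2⟩

end Bounds

/-- A pair `p` stands for the interval `Icc p.1 p.2`; fixed points of this map are the solutions
of (◇) with `z1⁻ = z2⁻` and `z1⁺ = z2⁺`. -/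
noncomputable def boundaryStep (lam θ : ℝ) (k : ℕ) (p : ℝ × ℝ) : ℝ × ℝ :=
  (lam * F θ p.1 p.2 ^ k, lam * F θ p.2 p.1 ^ k)

noncomputable def boundarySeq (lam θ : ℝ) (k : ℕ) (n : ℕ) : ℝ × ℝ :=
  (boundaryStep lam θ k)^[n] (lam * θ ^ k, lam)

section Iteration

variable {lam θ : ℝ} {k : ℕ}

lemma boundarySeq_succ (n : ℕ) :
    boundarySeq lam θ k (n + 1) = boundaryStep lam θ k (boundarySeq lam θ k n) :=
  iterate_succ_apply' _ n _

lemma mul_F_pow_mem_Icc_boundaryStep {p : ℝ × ℝ} {x y : ℝ} (hlam : 0 ≤ lam) (hθ0 : 0 ≤ θ)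
    (hθ1 : θ ≤ 1) (hp : 0 ≤ p.1) (hx : x ∈ Icc p.1 p.2) (hy : y ∈ Icc p.1 p.2) :
    lam * F θ x y ^ k ∈ Icc (boundaryStep lam θ k p).1 (boundaryStep lam θ k p).2 :=
  mul_pow_mem_Icc hlam (hθ0.trans (le_F hθ1 hp (hp.trans (hx.1.trans hx.2))))
    (F_mem_Icc hθ1 hp hx hy) k

lemma boundarySeq_nested (hlam : 0 ≤ lam) (hθ0 : 0 ≤ θ) (hθ1 : θ ≤ 1) (n : ℕ) :
    lam * θ ^ k ≤ (boundarySeq lam θ k n).1 ∧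
      (boundarySeq lam θ k (n + 1)).1 ∈ Icc (boundarySeq lam θ k n).1 (boundarySeq lam θ k n).2 ∧
      (boundarySeq lam θ k (n + 1)).2 ∈ Icc (boundarySeq lam θ k n).1 (boundarySeq lam θ k n).2 := by
  have hbot : 0 ≤ lam * θ ^ k := by positivity
  simp only [boundarySeq_succ]
  induction n with
  | zero =>
    have hle : lam * θ ^ k ≤ lam := mul_le_of_le_one_right hlam (pow_le_one₀ hθ0 hθ1)
    have h : ∀ x y, x ∈ Icc (lam * θ ^ k) lam → y ∈ Icc (lam * θ ^ k) lam →
        lam * F θ x y ^ k ∈ Icc (lam * θ ^ k) lam := fun x y hx hy => by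
      simpa only [one_pow, mul_one] using mul_pow_mem_Icc hlam hθ0
        (F_mem_Icc_theta_one hθ1 (hbot.trans hx.1) (hbot.trans hy.1)) k
    exact ⟨le_rfl, h _ _ ⟨le_rfl, hle⟩ ⟨hle, le_rfl⟩, h _ _ ⟨hle, le_rfl⟩ ⟨le_rfl, hle⟩⟩
  | succ n ih =>
    obtain ⟨hpos, hlo, hhi⟩ := ih
    rw [boundarySeq_succ]
    set p := boundarySeq lam θ k n
    have hp : 0 ≤ p.1 := hbot.trans hpos
    exact ⟨hpos.trans hlo.1,
      mul_F_pow_mem_Icc_boundaryStep hlam hθ0 hθ1 hp hlo hhi,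
      mul_F_pow_mem_Icc_boundaryStep hlam hθ0 hθ1 hp hhi hlo⟩

lemma tendsto_boundarySeq (hlam : 0 ≤ lam) (hθ0 : 0 ≤ θ) (hθ1 : θ ≤ 1) :
    ∃ p : ℝ × ℝ, lam * θ ^ k ≤ p.1 ∧ p.1 ≤ p.2 ∧
      Tendsto (boundarySeq lam θ k) atTop (𝓝 p) := by
  set a := fun n => (boundarySeq lam θ k n).1
  set b := fun n => (boundarySeq lam θ k n).2
  have nested := boundarySeq_nested (k := k) hlam hθ0 hθ1
  have hab : ∀ n, a n ≤ b n := fun n => (nested n).2.1.1.trans (nested n).2.1.2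
  have ha : Monotone a := monotone_nat_of_le_succ fun n => (nested n).2.1.1
  have hb : Antitone b := antitone_nat_of_succ_le fun n => (nested n).2.2.2
  have ha_lim := tendsto_atTop_ciSup ha ⟨b 0, by
    rintro _ ⟨n, rfl⟩
    exact (hab n).trans (hb (Nat.zero_le n))⟩
  have hb_lim := tendsto_atTop_ciInf hb ⟨a 0, by
    rintro _ ⟨n, rfl⟩
    exact (ha (Nat.zero_le n)).trans (hab n)⟩
  exact ⟨(⨆ n, a n, ⨅ n, b n), ge_of_tendsto' ha_lim fun n => (nested n).1,
    le_of_tendsto_of_tendsto' ha_lim hb_lim hab, ha_lim.prodMk_nhds hb_lim⟩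

lemma isFixedPt_of_tendsto_boundarySeq {p : ℝ × ℝ} (hp1 : 0 ≤ p.1) (hp2 : 0 ≤ p.2)
    (h : Tendsto (boundarySeq lam θ k) atTop (𝓝 p)) : IsFixedPt (boundaryStep lam θ k) p := by
  refine isFixedPt_of_tendsto_iterate h ?_
  have h₁ : (1 + p.1 + p.2) ≠ 0 := by positivity
  have h₂ : (1 + p.2 + p.1) ≠ 0 := by positivity
  unfold boundaryStep F
  fun_prop (disch := assumption)

end Iteration

section TreeSolution

variable {lam θ : ℝ} {k : ℕ} {V : Type*} {S : V → Finset V} {w w' : V → ℝ}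

lemma mem_Icc_of_recursion (hS : ∀ i, #(S i) = k) (hlam : 0 ≤ lam) (hθ0 : 0 ≤ θ) (hθ1 : θ ≤ 1)
    (hrec : ∀ i, w i = lam * ∏ j ∈ S i, F θ (w j) (w' j)) (hw : ∀ j, 0 ≤ w j)
    (hw' : ∀ j, 0 ≤ w' j) (i : V) : w i ∈ Icc (lam * θ ^ k) lam := by
  rw [hrec i, ← hS i]
  simpa only [one_pow, mul_one] using
    mul_prod_mem_Icc hlam hθ0 fun j _ => F_mem_Icc_theta_one hθ1 (hw j) (hw' j)

lemma mem_Icc_boundaryStep_of_recursion (hS : ∀ i, #(S i) = k) (hlam : 0 ≤ lam) (hθ0 : 0 ≤ θ)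
    (hθ1 : θ ≤ 1) (hrec : ∀ i, w i = lam * ∏ j ∈ S i, F θ (w j) (w' j)) {p : ℝ × ℝ}
    (hp : 0 ≤ p.1) (hw : ∀ j, w j ∈ Icc p.1 p.2) (hw' : ∀ j, w' j ∈ Icc p.1 p.2) (i : V) :
    w i ∈ Icc (boundaryStep lam θ k p).1 (boundaryStep lam θ k p).2 := by
  have hc : 0 ≤ F θ p.1 p.2 :=
    hθ0.trans (le_F hθ1 hp (hp.trans ((hw i).1.trans (hw i).2)))
  rw [hrec i, ← hS i]
  exact mul_prod_mem_Icc hlam hc fun j _ => F_mem_Icc hθ1 hp (hw j) (hw' j)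

lemma mem_Icc_boundarySeq_of_recursion {z1 z2 : V → ℝ} (hS : ∀ i, #(S i) = k) (hlam : 0 ≤ lam)
    (hθ0 : 0 ≤ θ) (hθ1 : θ ≤ 1) (hz1 : ∀ i, 0 ≤ z1 i) (hz2 : ∀ i, 0 ≤ z2 i)
    (hrec1 : ∀ i, z1 i = lam * ∏ j ∈ S i, F θ (z1 j) (z2 j))
    (hrec2 : ∀ i, z2 i = lam * ∏ j ∈ S i, F θ (z2 j) (z1 j)) (n : ℕ) (i : V) :
    z1 i ∈ Icc (boundarySeq lam θ k n).1 (boundarySeq lam θ k n).2 ∧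
      z2 i ∈ Icc (boundarySeq lam θ k n).1 (boundarySeq lam θ k n).2 := by
  induction n generalizing i with
  | zero =>
    exact ⟨mem_Icc_of_recursion hS hlam hθ0 hθ1 hrec1 hz1 hz2 i,
      mem_Icc_of_recursion hS hlam hθ0 hθ1 hrec2 hz2 hz1 i⟩
  | succ n ih =>
    have hp : 0 ≤ (boundarySeq lam θ k n).1 :=
      (by positivity : 0 ≤ lam * θ ^ k).trans (boundarySeq_nested hlam hθ0 hθ1 n).1
    rw [boundarySeq_succ]
    exact ⟨mem_Icc_boundaryStep_of_recursion hS hlam hθ0 hθ1 hrec1 hp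
        (fun j => (ih j).1) (fun j => (ih j).2) i,
      mem_Icc_boundaryStep_of_recursion hS hlam hθ0 hθ1 hrec2 hp
        (fun j => (ih j).2) (fun j => (ih j).1) i⟩

end TreeSolution

end WidomRowlinson

theorem stmt_15_general (k : ℕ) (lam θ : ℝ) (hlam : 0 < lam)
    (hθ0 : 0 < θ) (hθ1 : θ < 1)
    (V : Type*) (S : V → Finset V) (hS : ∀ i, (S i).card = k)
    (z1 z2 : V → ℝ) (hz1 : ∀ i, 0 < z1 i) (hz2 : ∀ i, 0 < z2 i)
    (hrec1 : ∀ i, z1 i = lam * ∏ j ∈ S i, (1 + z1 j + θ * z2 j) / (1 + z1 j + z2 j))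
    (hrec2 : ∀ i, z2 i = lam * ∏ j ∈ S i, (1 + z2 j + θ * z1 j) / (1 + z2 j + z1 j)) :
    ∃ z1m z1p z2m z2p : ℝ, 0 < z1m ∧ 0 < z1p ∧ 0 < z2m ∧ 0 < z2p ∧
      z1m = lam * ((1 + z1m + θ * z2p) / (1 + z1m + z2p)) ^ k ∧
      z1p = lam * ((1 + z1p + θ * z2m) / (1 + z1p + z2m)) ^ k ∧
      z2m = lam * ((1 + z2m + θ * z1p) / (1 + z2m + z1p)) ^ k ∧
      z2p = lam * ((1 + z2p + θ * z1m) / (1 + z2p + z1m)) ^ k ∧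
      (∀ i, z1m ≤ z1 i ∧ z1 i ≤ z1p) ∧ (∀ i, z2m ≤ z2 i ∧ z2 i ≤ z2p) := by
  obtain ⟨p, hp1, hp12, hlim⟩ :=
    WidomRowlinson.tendsto_boundarySeq (k := k) hlam.le hθ0.le hθ1.le
  have hp_pos : 0 < p.1 := (by positivity : 0 < lam * θ ^ k).trans_le hp1
  have hfix := WidomRowlinson.isFixedPt_of_tendsto_boundarySeq hp_pos.le
    (hp_pos.le.trans hp12) hlim
  have hbounds := WidomRowlinson.mem_Icc_boundarySeq_of_recursion hS hlam.le hθ0.le hθ1.le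
    (fun i => (hz1 i).le) (fun i => (hz2 i).le) hrec1 hrec2
  have hfst : p.1 = lam * WidomRowlinson.F θ p.1 p.2 ^ k := (congrArg Prod.fst hfix).symm
  have hsnd : p.2 = lam * WidomRowlinson.F θ p.2 p.1 ^ k := (congrArg Prod.snd hfix).symm
  exact ⟨p.1, p.2, p.1, p.2, hp_pos, hp_pos.trans_le hp12, hp_pos, hp_pos.trans_le hp12,
    hfst, hsnd, hfst, hsnd,
    fun i => WidomRowlinson.mem_Icc_of_tendsto hlim fun n => (hbounds n i).1,
    fun i => WidomRowlinson.mem_Icc_of_tendsto hlim fun n => (hbounds n i).2⟩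

/-- Any positive tree solution `(z1, z2)` of the Widom–Rowlinson recursion on a rooted
Cayley tree of order `k` is bounded between the components of some positive solution
`(z1⁻, z1⁺, z2⁻, z2⁺)` of the boundary system (◇). -/
theorem stmt_15 (k : ℕ) (hk : 2 ≤ k) (lam θ : ℝ) (hlam : 0 < lam)
    (hθ0 : 0 < θ) (hθ1 : θ < 1)
    (V : Type*) (S : V → Finset V) (hS : ∀ i, (S i).card = k)
    (z1 z2 : V → ℝ) (hz1 : ∀ i, 0 < z1 i) (hz2 : ∀ i, 0 < z2 i)
    (hrec1 : ∀ i, z1 i = lam * ∏ j ∈ S i, (1 + z1 j + θ * z2 j) / (1 + z1 j + z2 j))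
    (hrec2 : ∀ i, z2 i = lam * ∏ j ∈ S i, (1 + z2 j + θ * z1 j) / (1 + z2 j + z1 j)) :
    ∃ z1m z1p z2m z2p : ℝ, 0 < z1m ∧ 0 < z1p ∧ 0 < z2m ∧ 0 < z2p ∧
      z1m = lam * ((1 + z1m + θ * z2p) / (1 + z1m + z2p)) ^ k ∧
      z1p = lam * ((1 + z1p + θ * z2m) / (1 + z1p + z2m)) ^ k ∧
      z2m = lam * ((1 + z2m + θ * z1p) / (1 + z2m + z1p)) ^ k ∧
      z2p = lam * ((1 + z2p + θ * z1m) / (1 + z2p + z1m)) ^ k ∧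
      (∀ i, z1m ≤ z1 i ∧ z1 i ≤ z1p) ∧ (∀ i, z2m ≤ z2 i ∧ z2 i ≤ z2p) :=
  stmt_15_general k lam θ hlam hθ0 hθ1 V S hS z1 z2 hz1 hz2 hrec1 hrec2
end

section
/- If (z1⁻, z1⁺, z2⁻, z2⁺) is a positive solution of the boundary system (◇), then z1⁻ = z1⁺ if and only if z2⁻ = z2⁺. -/
/-
Write `F(x, y) = (1 + x + θ y) / (1 + x + y) = 1 - (1 - θ) y / (1 + x + y)`. For fixed `x ≥ 0` and
`θ < 1` this is strictly decreasing in `y ≥ 0`, and it is positive, so `y ↦ λ F(x, y)^k` is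
injective. If `z1⁻ = z1⁺ = x`, the first two equations read `x = λ F(x, z2⁺)^k = λ F(x, z2⁻)^k`,
forcing `z2⁻ = z2⁺`; the converse is the same argument with the last two equations.
-/

lemma eq_of_div_add_mul_eq {θ c y₁ y₂ : ℝ} (hθ : θ < 1) (hc : 0 < c) (hy₁ : 0 ≤ y₁) (hy₂ : 0 ≤ y₂)
    (h : (c + θ * y₁) / (c + y₁) = (c + θ * y₂) / (c + y₂)) : y₁ = y₂ := by
  rw [div_eq_div_iff (by positivity) (by positivity)] at h
  have hcross : c * (1 - θ) * (y₂ - y₁) = 0 := by linear_combination h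
  have hcθ : c * (1 - θ) ≠ 0 := mul_ne_zero hc.ne' (by linarith)
  linarith [(mul_eq_zero.mp hcross).resolve_left hcθ]

lemma eq_of_pow_div_add_mul_eq {k : ℕ} {θ c y₁ y₂ : ℝ} (hk : k ≠ 0) (hθ0 : 0 ≤ θ) (hθ1 : θ < 1)
    (hc : 0 < c) (hy₁ : 0 ≤ y₁) (hy₂ : 0 ≤ y₂)
    (h : ((c + θ * y₁) / (c + y₁)) ^ k = ((c + θ * y₂) / (c + y₂)) ^ k) : y₁ = y₂ :=
  eq_of_div_add_mul_eq hθ1 hc hy₁ hy₂ <|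
    (pow_left_inj₀ (by positivity) (by positivity) hk).mp h

lemma eq_of_boundary_eq {k : ℕ} {lam θ x y₁ y₂ : ℝ} (hk : k ≠ 0) (hlam : lam ≠ 0)
    (hθ0 : 0 ≤ θ) (hθ1 : θ < 1) (hx : 0 ≤ x) (hy₁ : 0 ≤ y₁) (hy₂ : 0 ≤ y₂)
    (h₁ : x = lam * ((1 + x + θ * y₁) / (1 + x + y₁)) ^ k)
    (h₂ : x = lam * ((1 + x + θ * y₂) / (1 + x + y₂)) ^ k) : y₁ = y₂ :=
  eq_of_pow_div_add_mul_eq hk hθ0 hθ1 (by positivity) hy₁ hy₂ <|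
    mul_left_cancel₀ hlam (h₁.symm.trans h₂)

/-- For any positive solution `(z1⁻, z1⁺, z2⁻, z2⁺)` of the boundary system (◇):
`z1⁻ = z1⁺` if and only if `z2⁻ = z2⁺`. -/
theorem stmt_16 (k : ℕ) (hk : 2 ≤ k) (lam θ : ℝ) (hlam : 0 < lam)
    (hθ0 : 0 < θ) (hθ1 : θ < 1)
    (z1m z1p z2m z2p : ℝ) (h1m : 0 < z1m) (h1p : 0 < z1p) (h2m : 0 < z2m) (h2p : 0 < z2p)
    (e1 : z1m = lam * ((1 + z1m + θ * z2p) / (1 + z1m + z2p)) ^ k)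
    (e2 : z1p = lam * ((1 + z1p + θ * z2m) / (1 + z1p + z2m)) ^ k)
    (e3 : z2m = lam * ((1 + z2m + θ * z1p) / (1 + z2m + z1p)) ^ k)
    (e4 : z2p = lam * ((1 + z2p + θ * z1m) / (1 + z2p + z1m)) ^ k) :
    z1m = z1p ↔ z2m = z2p := by
  have hk0 : k ≠ 0 := by omega
  constructor
  · rintro rfl
    exact eq_of_boundary_eq hk0 hlam.ne' hθ0.le hθ1 h1m.le h2m.le h2p.le e2 e1
  · rintro rfl
    exact (eq_of_boundary_eq hk0 hlam.ne' hθ0.le hθ1 h2m.le h1p.le h1m.le e3 e4).symm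
end

section
/- Let θ > 0 and define f(x, y) = ln((1 + e^x + θe^y)/(1 + e^x + e^y)) on ℝ². Then for all (x, y) ∈ ℝ²: |∂f/∂x (x, y)| ≤ |1−√θ|/(1+√θ) and |∂f/∂y (x, y)| ≤ |1−√θ|/(1+√θ); moreover for all x, u, y ∈ ℝ: |f(x, y) − f(u, y)| ≤ (|1−√θ|/(1+√θ))·|x − u|. -/
/-!
Both partial derivatives of `f` are, up to sign, of the form `c/(a + θb) - c/(a + b)` with
`a = 1 + eˣ`, `b = e^y` and `0 ≤ c ≤ a`. Its absolute value is at most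
`|θ - 1| a b / ((a + θb)(a + b))`, and `(1 + √θ)² a b ≤ (a + θb)(a + b)` is AM-GM
`2√θ a b ≤ a² + θ b²`. The Lipschitz bound in `x` then follows from the mean value theorem.
-/

open Real

theorem HasDerivAt.log_div {f g : ℝ → ℝ} {f' g' x : ℝ} (hf : HasDerivAt f f' x)
    (hg : HasDerivAt g g' x) (hfx : f x ≠ 0) (hgx : g x ≠ 0) :
    HasDerivAt (fun t => Real.log (f t / g t)) (f' / f x - g' / g x) x :=
  ((hf.div hg hgx).log (div_ne_zero hfx hgx)).congr_deriv (by rw [Pi.div_apply]; field_simp)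

section LogRatioBound

variable {θ a b c : ℝ}

theorem abs_div_add_mul_sub_div_add_le (hθ : 0 ≤ θ) (ha : 0 < a) (hb : 0 ≤ b) :
    |a / (a + θ * b) - a / (a + b)| ≤ |1 - √θ| / (1 + √θ) := by
  have hA : 0 < a + θ * b := by positivity
  have hB : 0 < a + b := by positivity
  have hs : √θ ^ 2 = θ := sq_sqrt hθ
  have hdiff : a / (a + θ * b) - a / (a + b) = (1 - √θ) * (1 + √θ) * (a * b) /
      ((a + θ * b) * (a + b)) := by
    field_simp
    linear_combination b * hs
  have amgm : (1 + √θ) ^ 2 * (a * b) ≤ (a + θ * b) * (a + b) := by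
    have hsq : (a + θ * b) * (a + b) - (1 + √θ) ^ 2 * (a * b) = (a - √θ * b) ^ 2 := by
      linear_combination (-(b ^ 2) - a * b) * hs
    linarith [sq_nonneg (a - √θ * b)]
  rw [hdiff, abs_div, abs_mul, abs_mul, abs_of_pos (by positivity : 0 < 1 + √θ),
    abs_of_nonneg (by positivity : 0 ≤ a * b), abs_of_pos (mul_pos hA hB),
    div_le_div_iff₀ (by positivity) (by positivity)]
  calc |1 - √θ| * (1 + √θ) * (a * b) * (1 + √θ)
      = |1 - √θ| * ((1 + √θ) ^ 2 * (a * b)) := by ring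
    _ ≤ |1 - √θ| * ((a + θ * b) * (a + b)) := by gcongr

theorem abs_div_add_mul_sub_div_add_le_of_le (hθ : 0 ≤ θ) (ha : 0 < a) (hb : 0 ≤ b)
    (hc : 0 ≤ c) (hca : c ≤ a) :
    |c / (a + θ * b) - c / (a + b)| ≤ |1 - √θ| / (1 + √θ) := by
  have hfactor : ∀ d, d / (a + θ * b) - d / (a + b) = d * (1 / (a + θ * b) - 1 / (a + b)) := by
    intro d
    ring
  calc |c / (a + θ * b) - c / (a + b)|
      ≤ |a / (a + θ * b) - a / (a + b)| := by
        rw [hfactor c, hfactor a, abs_mul, abs_mul, abs_of_nonneg hc, abs_of_pos ha]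
        gcongr
    _ ≤ |1 - √θ| / (1 + √θ) := abs_div_add_mul_sub_div_add_le hθ ha hb

theorem abs_mul_div_add_mul_sub_div_add_le (hθ : 0 ≤ θ) (ha : 0 < a) (hb : 0 ≤ b) :
    |θ * b / (a + θ * b) - b / (a + b)| ≤ |1 - √θ| / (1 + √θ) := by
  have hswap : θ * b / (a + θ * b) - b / (a + b) = -(a / (a + θ * b) - a / (a + b)) := by
    field_simp
    ring
  rw [hswap, abs_neg]
  exact abs_div_add_mul_sub_div_add_le hθ ha hb

end LogRatioBound

/-- Bounds on the partial derivatives and a Lipschitz estimate for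
`f(x, y) = ln((1 + eˣ + θ·e^y)/(1 + eˣ + e^y))`. -/
theorem stmt_18 (θ : ℝ) (hθ : 0 < θ) :
    (∀ x y : ℝ,
      ∃ d : ℝ,
        HasDerivAt
          (fun t : ℝ =>
            Real.log ((1 + Real.exp t + θ * Real.exp y) / (1 + Real.exp t + Real.exp y)))
          d x ∧
        |d| ≤ |1 - Real.sqrt θ| / (1 + Real.sqrt θ)) ∧
    (∀ x y : ℝ,
      ∃ d : ℝ,
        HasDerivAt
          (fun t : ℝ =>
            Real.log ((1 + Real.exp x + θ * Real.exp t) / (1 + Real.exp x + Real.exp t)))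
          d y ∧
        |d| ≤ |1 - Real.sqrt θ| / (1 + Real.sqrt θ)) ∧
    (∀ x u y : ℝ,
      |Real.log ((1 + Real.exp x + θ * Real.exp y) / (1 + Real.exp x + Real.exp y)) -
          Real.log ((1 + Real.exp u + θ * Real.exp y) / (1 + Real.exp u + Real.exp y))| ≤
        |1 - Real.sqrt θ| / (1 + Real.sqrt θ) * |x - u|) := by
  have hderiv_x : ∀ x y : ℝ, HasDerivAt
      (fun t => log ((1 + exp t + θ * exp y) / (1 + exp t + exp y)))
      (exp x / (1 + exp x + θ * exp y) - exp x / (1 + exp x + exp y)) x := fun x y =>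
    HasDerivAt.log_div (((hasDerivAt_exp x).const_add 1).add_const _)
      (((hasDerivAt_exp x).const_add 1).add_const _) (by positivity) (by positivity)
  have hbound_x : ∀ x y : ℝ,
      |exp x / (1 + exp x + θ * exp y) - exp x / (1 + exp x + exp y)| ≤
        |1 - √θ| / (1 + √θ) := fun x y =>
    abs_div_add_mul_sub_div_add_le_of_le hθ.le (by positivity) (exp_pos y).le (exp_pos x).le
      (by linarith)
  have hderiv_y : ∀ x y : ℝ, HasDerivAt
      (fun t => log ((1 + exp x + θ * exp t) / (1 + exp x + exp t)))
      (θ * exp y / (1 + exp x + θ * exp y) - exp y / (1 + exp x + exp y)) y := fun x y =>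
    HasDerivAt.log_div (((hasDerivAt_exp y).const_mul θ).const_add _)
      ((hasDerivAt_exp y).const_add _) (by positivity) (by positivity)
  refine ⟨fun x y => ⟨_, hderiv_x x y, hbound_x x y⟩, fun x y => ⟨_, hderiv_y x y,
    abs_mul_div_add_mul_sub_div_add_le hθ.le (by positivity) (exp_pos y).le⟩, fun x u y => ?_⟩
  simpa only [Real.norm_eq_abs] using convex_univ.norm_image_sub_le_of_norm_hasDerivWithin_le
    (fun t _ => (hderiv_x t y).hasDerivWithinAt) (fun t _ => hbound_x t y)
    (Set.mem_univ u) (Set.mem_univ x)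
end
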